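/- arXiv:math/0302293 — 9 statements merged into one kernel-verified Lean document; each statement's English description precedes it below -/
import Mathlib

section
/- For all integers k ≥ 1 and n ≥ 1, the k-riffle shuffle measure is a probability measure: Σ_{π ∈ S_n} binom(n+k−d(π)−1, n)/k^n = 1. -/
/-- Number of descents of a permutation of `{1,...,n}` (here `Fin n`, 0-indexed):
the number of positions `i` with `1 ≤ i ≤ n-1` and `π(i) > π(i+1)`. -/
def numDescents (n : ℕ) (π : Equiv.Perm (Fin n)) : ℕ :=
  ((Finset.range (n - 1)).filter (fun i =>
    ∃ h : i + 1 < n, π ⟨i + 1, h⟩ < π ⟨i, Nat.lt_of_succ_lt h⟩)).card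

/-- `π` has a cyclic descent at `n` if `π(n) > π(1)`. -/
def hasCyclicDescentAtLast (n : ℕ) (π : Equiv.Perm (Fin n)) : Prop :=
  ∃ h : 0 < n, π ⟨0, h⟩ < π ⟨n - 1, Nat.sub_lt h Nat.one_pos⟩

instance (n : ℕ) (π : Equiv.Perm (Fin n)) : Decidable (hasCyclicDescentAtLast n π) :=
  exists_prop_decidable _

/-- Number of cyclic descents: `d(π)+1` if `π` has a cyclic descent at `n`, else `d(π)`. -/
def numCyclicDescents (n : ℕ) (π : Equiv.Perm (Fin n)) : ℕ :=
  numDescents n π + if hasCyclicDescentAtLast n π then 1 else 0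

/-- The k-riffle shuffle measure `R_{k,n}(π) = binom(n+k-d(π)-1, n) / k^n`. -/
noncomputable def riffle (k n : ℕ) (π : Equiv.Perm (Fin n)) : ℝ :=
  (Nat.choose (n + k - numDescents n π - 1) n : ℝ) / (k : ℝ) ^ n

/-- The cut-then-k-riffle-shuffle measure
`C_{k,n}(π) = binom(n+k-cd(π)-1, n-1) / (n·k^(n-1))`. -/
noncomputable def cutRiffle (k n : ℕ) (π : Equiv.Perm (Fin n)) : ℝ :=
  (Nat.choose (n + k - numCyclicDescents n π - 1) (n - 1) : ℝ) / ((n : ℝ) * (k : ℝ) ^ (n - 1))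

/-!
Worpitzky's identity `∑_π binom(n + k - d(π) - 1, n) = k^n`, proved by sorting words.
A word `w : Fin n → Fin k` is stably sorted by a unique permutation `π = Tuple.sort w`, and
`w ∘ π` is weakly increasing, strictly so exactly at the descents of `π`. Adding to the `i`-th
letter the number of weak steps before position `i` turns these sequences bijectively into the
strictly increasing maps `Fin n → Fin (k + n - 1 - d(π))`, of which there are
`binom(n + k - d(π) - 1, n)`.
-/

open Finset

theorem Fin.val_add_sub_le_of_strictMono {n m : ℕ} {f : Fin n → Fin m} (hf : StrictMono f)
    {i j : Fin n} (hij : i ≤ j) : (f i : ℕ) + (j - i) ≤ f j := by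
  have hcard := card_le_card_of_injOn f (s := Icc i j) (t := Icc (f i) (f j))
    (fun x hx => by
      simp only [coe_Icc, Set.mem_Icc] at hx ⊢
      exact ⟨hf.monotone hx.1, hf.monotone hx.2⟩) hf.injective.injOn
  simp only [Fin.card_Icc] at hcard
  have := Fin.le_def.1 (hf.monotone hij)
  have := Fin.le_def.1 hij
  omega

theorem Fin.le_val_of_strictMono {n m : ℕ} {f : Fin n → Fin m} (hf : StrictMono f) (i : Fin n) :
    (i : ℕ) ≤ f i := by
  have : NeZero n := ⟨i.pos.ne'⟩
  have := Fin.val_add_sub_le_of_strictMono hf (Fin.zero_le i)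
  simp only [Fin.val_zero] at this
  omega

theorem Nat.card_orderEmbedding_fin (a b : ℕ) : Nat.card (Fin a ↪o Fin b) = b.choose a := by
  rw [Nat.card_congr Set.powersetCard.ofFinEmbEquiv, Set.powersetCard.card, Nat.card_fin]

theorem Tuple.eq_sort_iff_lt_succ {α : Type*} [LinearOrder α] {N : ℕ} {f : Fin (N + 1) → α}
    {σ : Equiv.Perm (Fin (N + 1))} :
    σ = Tuple.sort f ↔ ∀ i : Fin N,
      f (σ i.castSucc) < f (σ i.succ) ∨
        f (σ i.castSucc) = f (σ i.succ) ∧ σ i.castSucc < σ i.succ := by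
  rw [Tuple.eq_sort_iff', Fin.strictMono_iff_lt_succ]
  simp only [Equiv.trans_apply, ← Subtype.coe_lt_coe, Tuple.graphEquiv₁, Equiv.coe_fn_mk]
  exact forall_congr' fun _ => Prod.Lex.toLex_lt_toLex

def descentSet (n : ℕ) (π : Equiv.Perm (Fin n)) : Finset ℕ :=
  (range (n - 1)).filter (fun i => ∃ h : i + 1 < n, π ⟨i + 1, h⟩ < π ⟨i, Nat.lt_of_succ_lt h⟩)

theorem card_descentSet (n : ℕ) (π : Equiv.Perm (Fin n)) : #(descentSet n π) = numDescents n π :=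
  rfl

theorem descentSet_subset (n : ℕ) (π : Equiv.Perm (Fin n)) : descentSet n π ⊆ range (n - 1) :=
  filter_subset _ _

theorem mem_descentSet {N : ℕ} (π : Equiv.Perm (Fin (N + 1))) (i : Fin N) :
    (i : ℕ) ∈ descentSet (N + 1) π ↔ π i.succ < π i.castSucc := by
  simp [descentSet, Fin.succ, Fin.castSucc, Fin.castAdd, Fin.castLE]

def MonotoneStrictAt {N k : ℕ} (S : Finset ℕ) (g : Fin (N + 1) → Fin k) : Prop :=
  ∀ i : Fin N, if (i : ℕ) ∈ S then g i.castSucc < g i.succ else g i.castSucc ≤ g i.succ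

theorem sort_eq_iff_monotoneStrictAt {N k : ℕ} (w : Fin (N + 1) → Fin k)
    (π : Equiv.Perm (Fin (N + 1))) :
    Tuple.sort w = π ↔ MonotoneStrictAt (descentSet (N + 1) π) (w ∘ π) := by
  rw [eq_comm, Tuple.eq_sort_iff_lt_succ, MonotoneStrictAt]
  refine forall_congr' fun i => ?_
  have hne : π i.castSucc ≠ π i.succ := π.injective.ne Fin.castSucc_lt_succ.ne
  simp only [mem_descentSet, Function.comp_apply]
  split_ifs with hdes
  · simp [hdes.not_gt]
  · simp [lt_of_le_of_ne (not_lt.1 hdes) hne, le_iff_lt_or_eq]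

def weakSteps (S : Finset ℕ) (i : ℕ) : ℕ := #(range i \ S)

namespace weakSteps

variable (S : Finset ℕ)

theorem eq_add_card_Ico {i j : ℕ} (hij : i ≤ j) :
    weakSteps S j = weakSteps S i + #(Ico i j \ S) := by
  rw [weakSteps, weakSteps, range_eq_Ico, range_eq_Ico,
    ← Ico_union_Ico_eq_Ico (Nat.zero_le i) hij, union_sdiff_distrib, card_union_of_disjoint
      ((Ico_disjoint_Ico_consecutive 0 i j).mono sdiff_le sdiff_le)]

theorem mono : Monotone (weakSteps S) := fun _ _ hij => by
  rw [eq_add_card_Ico S hij]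
  exact Nat.le_add_right _ _

theorem le_add {i j : ℕ} (hij : i ≤ j) : weakSteps S j ≤ weakSteps S i + (j - i) := by
  rw [eq_add_card_Ico S hij, ← Nat.card_Ico]
  exact Nat.add_le_add_left (card_le_card sdiff_subset) _

theorem le_self (i : ℕ) : weakSteps S i ≤ i := by
  simpa [weakSteps] using le_add S (Nat.zero_le i)

theorem succ (i : ℕ) : weakSteps S (i + 1) = weakSteps S i + if i ∈ S then 0 else 1 := by
  rw [eq_add_card_Ico S i.le_succ, Nat.Ico_succ_singleton]
  split_ifs with hi <;> simp [hi, sdiff_eq_self_of_disjoint]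

theorem of_subset_range {N : ℕ} (hS : S ⊆ range N) : weakSteps S N = N - #S := by
  rw [weakSteps, card_sdiff_of_subset hS, card_range]

end weakSteps

section Shift

variable {N k : ℕ} {S : Finset ℕ}

def addWeakSteps (hS : S ⊆ range N) (g : {g : Fin (N + 1) → Fin k // MonotoneStrictAt S g}) :
    Fin (N + 1) ↪o Fin (k + (N - #S)) :=
  OrderEmbedding.ofStrictMono
    (fun i => ⟨g.1 i + weakSteps S i, by
      have := (g.1 i).isLt
      have := weakSteps.mono S (Nat.lt_succ_iff.1 i.isLt)
      have := weakSteps.of_subset_range S hS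
      omega⟩)
    (Fin.strictMono_iff_lt_succ.2 fun i => by
      have hg := g.2 i
      have hsucc := weakSteps.succ S i
      by_cases hi : (i : ℕ) ∈ S <;>
        simp only [hi, if_true, if_false, Fin.lt_def, Fin.le_def, Fin.val_castSucc,
          Fin.val_succ] at hsucc hg ⊢ <;> omega)

def subWeakSteps (hS : S ⊆ range N) (h : Fin (N + 1) ↪o Fin (k + (N - #S))) :
    {g : Fin (N + 1) → Fin k // MonotoneStrictAt S g} :=
  ⟨fun i => ⟨h i - weakSteps S i, by
    have := Fin.val_add_sub_le_of_strictMono h.strictMono (Fin.le_last i)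
    have := (h (Fin.last N)).isLt
    have := weakSteps.le_add S (Nat.lt_succ_iff.1 i.isLt)
    have := weakSteps.of_subset_range S hS
    have := Fin.le_val_of_strictMono h.strictMono i
    have := weakSteps.le_self S i
    simp only [Fin.val_last] at *
    omega⟩,
  fun i => by
    have hlt := h.strictMono (Fin.castSucc_lt_succ (i := i))
    have h₀ := Fin.le_val_of_strictMono h.strictMono i.castSucc
    have h₁ := Fin.le_val_of_strictMono h.strictMono i.succ
    have hsucc := weakSteps.succ S i
    have := weakSteps.le_self S i
    by_cases hi : (i : ℕ) ∈ S <;>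
      simp only [hi, if_true, if_false, Fin.lt_def, Fin.le_def, Fin.val_castSucc,
        Fin.val_succ] at hsucc hlt h₀ h₁ ⊢ <;> omega⟩

theorem card_monotoneStrictAt (N k : ℕ) {S : Finset ℕ} (hS : S ⊆ range N) :
    Nat.card {g : Fin (N + 1) → Fin k // MonotoneStrictAt S g} =
      (k + (N - #S)).choose (N + 1) := by
  rw [← Nat.card_orderEmbedding_fin]
  refine Nat.card_congr
    { toFun := addWeakSteps hS
      invFun := subWeakSteps hS
      left_inv := fun g => by ext i; simp [addWeakSteps, subWeakSteps]
      right_inv := fun h => by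
        ext i
        have := Fin.le_val_of_strictMono h.strictMono i
        have := weakSteps.le_self S i
        simp only [addWeakSteps, subWeakSteps, OrderEmbedding.coe_ofStrictMono]
        omega }

end Shift

theorem card_sort_eq (n k : ℕ) (π : Equiv.Perm (Fin n)) :
    Nat.card {w : Fin n → Fin k // Tuple.sort w = π} = (n + k - numDescents n π - 1).choose n := by
  cases n with
  | zero => simp [Subsingleton.elim _ π]
  | succ N =>
    have hD : descentSet (N + 1) π ⊆ range N := by simpa using descentSet_subset (N + 1) π
    have hcard : #(descentSet (N + 1) π) ≤ N := by simpa using card_le_card hD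
    rw [Nat.card_congr (Equiv.subtypeEquiv (π.arrowCongr (Equiv.refl _)).symm
      fun w => sort_eq_iff_monotoneStrictAt w π), card_monotoneStrictAt N k hD,
      ← card_descentSet]
    congr 1
    omega

theorem sum_choose_numDescents (n k : ℕ) :
    ∑ π : Equiv.Perm (Fin n), (n + k - numDescents n π - 1).choose n = k ^ n := by
  simp_rw [← card_sort_eq]
  rw [← Nat.card_sigma, Nat.card_congr (Equiv.sigmaFiberEquiv _), Nat.card_fun, Nat.card_fin,
    Nat.card_fin]

theorem riffle_sum_eq_one_general (n k : ℕ) (hk : 1 ≤ k) :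
    ∑ π : Equiv.Perm (Fin n), riffle k n π = 1 := by
  have hpow : (k : ℝ) ^ n ≠ 0 := pow_ne_zero _ (by positivity)
  simp only [riffle, ← sum_div]
  rw [div_eq_one_iff_eq hpow]
  exact_mod_cast sum_choose_numDescents n k

/-- the k-riffle shuffle measure is a probability measure. -/
theorem riffle_sum_eq_one (n k : ℕ) (hn : 1 ≤ n) (hk : 1 ≤ k) :
    ∑ π : Equiv.Perm (Fin n), riffle k n π = 1 :=
  riffle_sum_eq_one_general n k hk
end

section
/- Let n ≥ 1, k ≥ 1, and let ζ ∈ S_n be the n-cycle sending 1 → 2 → ⋯ → n → 1. Then a k-riffle shuffle followed by a cut and a cut followed by a k-riffle shuffle induce the same measure on conjugacy classes: for every conjugacy class K of the symmetric group S_n, Σ_{j=1}^{n} Σ_{σ ∈ S_n with σ·ζ^j ∈ K} R_{k,n}(σ) = Σ_{j=1}^{n} Σ_{σ ∈ S_n with ζ^j·σ ∈ K} R_{k,n}(σ). -/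
open scoped Classical in
/-- a k-riffle shuffle followed by a cut and a cut followed by a
k-riffle shuffle induce the same measure on conjugacy classes. Here `g` ranges over
all permutations, so `{x | IsConj g x}` ranges over all conjugacy classes. -/
theorem riffle_cut_conjClass (n k : ℕ) (hn : 1 ≤ n) (hk : 1 ≤ k)
    (g : Equiv.Perm (Fin n)) :
    ∑ j ∈ Finset.Icc 1 n,
        ∑ σ ∈ Finset.univ.filter (fun σ : Equiv.Perm (Fin n) =>
            IsConj g (σ * (finRotate n) ^ j)), riffle k n σ
      = ∑ j ∈ Finset.Icc 1 n,
          ∑ σ ∈ Finset.univ.filter (fun σ : Equiv.Perm (Fin n) =>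
              IsConj g ((finRotate n) ^ j * σ)), riffle k n σ := by
  refine Finset.sum_congr rfl fun j _ => Finset.sum_congr ?_ fun _ _ => rfl
  ext σ
  have hc : IsConj (σ * (finRotate n) ^ j) ((finRotate n) ^ j * σ) :=
    isConj_iff.2 ⟨(finRotate n) ^ j, by group⟩
  simp only [Finset.mem_filter, Finset.mem_univ, true_and]
  exact ⟨fun h => h.trans hc, fun h => h.trans hc.symm⟩
end

section
/- For n > 1 and any integer d with 1 ≤ d ≤ n−1, the number of permutations π of {1,…,n} with cd(π) = d and d(π) = d−1 equals d·A_{n−1,d}. -/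
/-- Eulerian number `A_{m,j}`: the number of permutations of `m` symbols with `j-1` descents. -/
def eulerianA (m j : ℕ) : ℕ :=
  (Finset.univ.filter (fun π : Equiv.Perm (Fin m) => numDescents m π = j - 1)).card

open Finset Equiv
open Fin.NatCast Fin.CommRing

theorem Equiv.Perm.apply_inv_self {α : Type*} (e : Equiv.Perm α) (x : α) : e (e⁻¹ x) = x :=
  Equiv.apply_symm_apply e x

theorem Equiv.Perm.inv_apply_self {α : Type*} (e : Equiv.Perm α) (x : α) : e⁻¹ (e x) = x :=
  Equiv.symm_apply_apply e x

/-- The set of cyclic descent positions. -/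
def cdSet (n : ℕ) (π : Equiv.Perm (Fin n)) : Finset (Fin n) :=
  Finset.univ.filter fun i => π (finRotate n i) < π i

lemma rot_pow_apply (m k : ℕ) (i : Fin (m+1)) :
    ((finRotate (m+1)) ^ k) i = i + (k : Fin (m+1)) := by
  induction k with
  | zero => simp
  | succ k ih =>
    rw [pow_succ']
    rw [Equiv.Perm.mul_apply, finRotate_succ_apply, ih]
    push_cast
    ring

lemma finRotate_castSucc (m : ℕ) (x : Fin m) :
    finRotate (m+1) x.castSucc = x.succ := by
  rw [finRotate_succ_apply, Fin.coeSucc_eq_succ]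

lemma numDescents_eq (m : ℕ) (π : Equiv.Perm (Fin (m+1))) :
    numDescents (m+1) π
      = (Finset.univ.filter fun t : Fin m =>
          π (finRotate (m+1) t.castSucc) < π t.castSucc).card := by
  rw [numDescents]
  refine Finset.card_bij' (fun (a : ℕ) (ha : a ∈ _) => (⟨a, by
      simp only [Finset.mem_filter, Finset.mem_range] at ha; omega⟩ : Fin m))
    (fun (t : Fin m) _ => (t : ℕ)) ?hi ?hj ?li ?ri
  case hi =>
    intro a ha
    simp only [Finset.mem_filter, Finset.mem_range] at ha
    obtain ⟨ha1, h, ha2⟩ := ha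
    simp only [Finset.mem_filter, Finset.mem_univ, true_and, finRotate_castSucc]
    exact ha2
  case hj =>
    intro t ht
    simp only [Finset.mem_filter, Finset.mem_univ, true_and, finRotate_castSucc] at ht
    simp only [Finset.mem_filter, Finset.mem_range]
    have hlt : (t : ℕ) < m + 1 - 1 := by omega
    refine ⟨hlt, by omega, ?_⟩
    exact ht
  case li => intro a ha; rfl
  case ri => intro t ht; rfl

lemma cdSet_card (m : ℕ) (π : Equiv.Perm (Fin (m+1))) :
    (cdSet (m+1) π).card = numCyclicDescents (m+1) π := by
  rw [cdSet, Fin.univ_castSuccEmb, Finset.filter_cons, apply_ite Finset.card,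
    Finset.card_cons, Finset.filter_map, Finset.card_map]
  have hcomp : #(Finset.univ.filter ((fun i => π (finRotate (m+1) i) < π i) ∘ ⇑Fin.castSuccEmb))
      = numDescents (m+1) π := by
    rw [numDescents_eq]
    rfl
  have hwrap : (π (finRotate (m+1) (Fin.last m)) < π (Fin.last m)) ↔
      hasCyclicDescentAtLast (m+1) π := by
    rw [hasCyclicDescentAtLast]
    have h0 : finRotate (m+1) (Fin.last m) = 0 := by
      rw [finRotate_succ_apply, Fin.last_add_one]
    rw [h0]
    constructor
    · intro h; exact ⟨Nat.succ_pos m, by convert h using 2 <;> apply Fin.ext <;> simp⟩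
    · rintro ⟨h, hh⟩; convert hh using 2 <;> apply Fin.ext <;> simp
  rw [numCyclicDescents]
  by_cases hc : hasCyclicDescentAtLast (m+1) π
  · rw [if_pos (hwrap.mpr hc), if_pos hc, hcomp]
  · rw [if_neg (fun h => hc (hwrap.mp h)), if_neg hc, hcomp]; omega

lemma mem_last_cdSet_iff (m : ℕ) (π : Equiv.Perm (Fin (m+1))) :
    Fin.last m ∈ cdSet (m+1) π ↔ hasCyclicDescentAtLast (m+1) π := by
  simp only [cdSet, Finset.mem_filter, Finset.mem_univ, true_and]
  rw [hasCyclicDescentAtLast]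
  have h0 : finRotate (m+1) (Fin.last m) = 0 := by
    rw [finRotate_succ_apply, Fin.last_add_one]
  rw [h0]
  constructor
  · intro h; exact ⟨Nat.succ_pos m, by convert h using 2 <;> apply Fin.ext <;> simp⟩
  · rintro ⟨h, hh⟩; convert hh using 2 <;> apply Fin.ext <;> simp

lemma mem_cdSet_mul (m : ℕ) (π ρ : Equiv.Perm (Fin (m+1)))
    (h : ∀ x, ρ (finRotate (m+1) x) = finRotate (m+1) (ρ x)) (i : Fin (m+1)) :
    i ∈ cdSet (m+1) (π * ρ) ↔ ρ i ∈ cdSet (m+1) π := by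
  simp only [cdSet, Finset.mem_filter, Finset.mem_univ, true_and, Equiv.Perm.mul_apply, h]

lemma rot_pow_comm (m k : ℕ) (x : Fin (m+1)) :
    ((finRotate (m+1))^k) (finRotate (m+1) x)
      = finRotate (m+1) (((finRotate (m+1))^k) x) := by
  simp only [rot_pow_apply, finRotate_succ_apply]
  ring

lemma rot_pow_inv_comm (m k : ℕ) (x : Fin (m+1)) :
    (((finRotate (m+1))^k)⁻¹) (finRotate (m+1) x)
      = finRotate (m+1) ((((finRotate (m+1))^k)⁻¹) x) := by
  apply ((finRotate (m+1))^k).injective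
  rw [Equiv.Perm.apply_inv_self, rot_pow_comm, Equiv.Perm.apply_inv_self]

lemma card_cdSet_mul (m : ℕ) (π ρ : Equiv.Perm (Fin (m+1)))
    (h : ∀ x, ρ (finRotate (m+1) x) = finRotate (m+1) (ρ x)) :
    (cdSet (m+1) (π * ρ)).card = (cdSet (m+1) π).card := by
  apply Finset.card_nbij (fun i => ρ i)
  · intro a ha; exact (mem_cdSet_mul m π ρ h a).mp ha
  · intro a _ b _ hab; exact ρ.injective hab
  · intro b hb
    refine ⟨ρ⁻¹ b, ?_, by simp⟩
    rw [Finset.mem_coe] at *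
    exact (mem_cdSet_mul m π ρ h _).mpr (by simpa using hb)

/-- Extend a permutation of `Fin (m+1)` to `Fin (m+2)` fixing the last element. -/
def extLast (m : ℕ) (σ : Equiv.Perm (Fin (m+1))) : Equiv.Perm (Fin (m+2)) :=
  (finSuccEquivLast (n := m+1)).symm.permCongr σ.optionCongr

/-- Restrict a permutation of `Fin (m+2)` (intended: fixing last) to `Fin (m+1)`. -/
def shrink (m : ℕ) (τ : Equiv.Perm (Fin (m+2))) : Equiv.Perm (Fin (m+1)) :=
  ((finSuccEquivLast (n := m+1)).permCongr τ).removeNone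

lemma extLast_castSucc (m : ℕ) (σ : Equiv.Perm (Fin (m+1))) (x : Fin (m+1)) :
    extLast m σ x.castSucc = (σ x).castSucc := by
  simp [extLast, Equiv.permCongr_apply]

lemma extLast_last (m : ℕ) (σ : Equiv.Perm (Fin (m+1))) :
    extLast m σ (Fin.last (m+1)) = Fin.last (m+1) := by
  simp [extLast, Equiv.permCongr_apply]

lemma shrink_spec (m : ℕ) (τ : Equiv.Perm (Fin (m+2)))
    (hτ : τ (Fin.last (m+1)) = Fin.last (m+1)) (i : Fin (m+1)) :
    (shrink m τ i).castSucc = τ i.castSucc := by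
  have hne : τ i.castSucc ≠ Fin.last (m+1) := by
    intro h
    have := τ.injective (h.trans hτ.symm)
    exact absurd this (Fin.castSucc_lt_last i).ne
  obtain ⟨j, hj⟩ := Fin.exists_castSucc_eq.mpr hne
  have key : ((finSuccEquivLast (n := m+1)).permCongr τ) (some i) = some j := by
    simp [Equiv.permCongr_apply, hj.symm ▸ (rfl : τ i.castSucc = τ i.castSucc)]
    rw [← hj]
    simp
  have h2 := Equiv.removeNone_some ((finSuccEquivLast (n := m+1)).permCongr τ) ⟨j, key⟩
  rw [key] at h2
  have : shrink m τ i = j := by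
    have := Option.some_injective _ h2
    exact this
  rw [this, hj]

lemma extLast_shrink (m : ℕ) (τ : Equiv.Perm (Fin (m+2)))
    (hτ : τ (Fin.last (m+1)) = Fin.last (m+1)) :
    extLast m (shrink m τ) = τ := by
  ext x
  rcases Fin.eq_castSucc_or_eq_last x with ⟨i, rfl⟩ | rfl
  · rw [extLast_castSucc, shrink_spec m τ hτ]
  · rw [extLast_last, hτ]

lemma shrink_extLast (m : ℕ) (σ : Equiv.Perm (Fin (m+1))) :
    shrink m (extLast m σ) = σ := by
  ext i : 1
  apply Fin.castSucc_injective
  rw [shrink_spec m _ (extLast_last m σ), extLast_castSucc]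

lemma card_cdSet_extLast (m : ℕ) (σ : Equiv.Perm (Fin (m+1))) :
    (cdSet (m+2) (extLast m σ)).card = numDescents (m+1) σ + 1 := by
  rw [cdSet_card, numCyclicDescents]
  have hwrap : hasCyclicDescentAtLast (m+2) (extLast m σ) := by
    refine ⟨Nat.succ_pos _, ?_⟩
    have h1 : (⟨0, Nat.succ_pos _⟩ : Fin (m+2)) = Fin.castSucc 0 := rfl
    have h2 : (⟨m+2-1, _⟩ : Fin (m+2)) = Fin.last (m+1) := rfl
    rw [h1, h2, extLast_castSucc, extLast_last]
    exact Fin.castSucc_lt_last _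
  rw [if_pos hwrap]
  congr 1
  rw [numDescents_eq (m+1) (extLast m σ), numDescents_eq m σ]
  rw [Fin.univ_castSuccEmb, Finset.filter_cons]
  have hlastcond : ¬ (extLast m σ (finRotate (m+2) (Fin.last m).castSucc)
      < extLast m σ (Fin.last m).castSucc) := by
    rw [finRotate_castSucc, Fin.succ_last, extLast_last, extLast_castSucc]
    exact not_lt.mpr (Fin.castSucc_lt_last _).le
  rw [if_neg hlastcond, Finset.filter_map, Finset.card_map]
  congr 1
  apply Finset.filter_congr
  intro s _
  show (extLast m σ (finRotate (m+2) (Fin.castSuccEmb s).castSucc)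
      < extLast m σ (Fin.castSuccEmb s).castSucc) ↔ _
  have e1 : (Fin.castSuccEmb s : Fin (m+1)) = s.castSucc := rfl
  rw [e1, finRotate_castSucc, Fin.succ_castSucc, extLast_castSucc, extLast_castSucc,
    finRotate_castSucc, Fin.castSucc_lt_castSucc_iff]

lemma rot_pow_last (m : ℕ) (k : Fin (m+2)) :
    ((finRotate (m+2)) ^ ((k : ℕ) + 1)) (Fin.last (m+1)) = k := by
  rw [rot_pow_apply]
  have h1 : (((k : ℕ) + 1 : ℕ) : Fin (m+2)) = k + 1 := by
    push_cast [Fin.cast_val_eq_self]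
    ring
  rw [h1, ← add_assoc, add_comm (Fin.last (m+1)) k, add_assoc, Fin.last_add_one,
    add_zero]

lemma rot_pow_inv_of (m : ℕ) (k : Fin (m+2)) :
    (((finRotate (m+2)) ^ ((k : ℕ) + 1))⁻¹) k = Fin.last (m+1) := by
  apply Equiv.injective ((finRotate (m+2)) ^ ((k : ℕ) + 1))
  rw [Equiv.Perm.apply_inv_self, rot_pow_last]

lemma card_X (m d : ℕ) (hd : 1 ≤ d) :
    (Finset.univ.filter fun π : Equiv.Perm (Fin (m+2)) => (cdSet (m+2) π).card = d).card
      = (m+2) * eulerianA (m+1) d := by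
  have key : (Finset.univ.filter fun π : Equiv.Perm (Fin (m+2)) => (cdSet (m+2) π).card = d).card
      = ((Finset.univ : Finset (Fin (m+2))) ×ˢ
          (Finset.univ.filter fun σ : Equiv.Perm (Fin (m+1)) =>
            numDescents (m+1) σ = d - 1)).card := by
    refine Finset.card_bij'
      (fun π _ => (π⁻¹ (Fin.last (m+1)),
        shrink m (π * (finRotate (m+2)) ^ (((π⁻¹ (Fin.last (m+1)) : Fin (m+2)) : ℕ) + 1))))
      (fun p _ => extLast m p.2 * ((finRotate (m+2)) ^ (((p.1 : Fin (m+2)) : ℕ) + 1))⁻¹)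
      ?hi ?hj ?li ?ri
    case hi =>
      intro π hπ
      simp only [Finset.mem_filter, Finset.mem_univ, true_and] at hπ
      simp only [Finset.mem_product, Finset.mem_filter, Finset.mem_univ, true_and]
      set k := π⁻¹ (Fin.last (m+1)) with hk
      set τ := π * (finRotate (m+2)) ^ ((k : ℕ) + 1) with hτ
      have hτlast : τ (Fin.last (m+1)) = Fin.last (m+1) := by
        rw [hτ, Equiv.Perm.mul_apply, rot_pow_last, hk, Equiv.Perm.apply_inv_self]
      have hcard : (cdSet (m+2) τ).card = d := by
        rw [hτ, card_cdSet_mul (m+1) π _ (rot_pow_comm (m+1) _)]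
        exact hπ
      have hext : extLast m (shrink m τ) = τ := extLast_shrink m τ hτlast
      have h2 := card_cdSet_extLast m (shrink m τ)
      rw [hext, hcard] at h2
      omega
    case hj =>
      intro p hp
      simp only [Finset.mem_product, Finset.mem_filter, Finset.mem_univ, true_and] at hp
      simp only [Finset.mem_filter, Finset.mem_univ, true_and]
      rw [card_cdSet_mul (m+1) _ _ (rot_pow_inv_comm (m+1) _), card_cdSet_extLast, hp]
      omega
    case li =>
      intro π hπ
      dsimp only
      set k := π⁻¹ (Fin.last (m+1)) with hk
      have hτlast : (π * (finRotate (m+2)) ^ ((k : ℕ) + 1)) (Fin.last (m+1))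
          = Fin.last (m+1) := by
        rw [Equiv.Perm.mul_apply, rot_pow_last, hk, Equiv.Perm.apply_inv_self]
      rw [extLast_shrink m _ hτlast, mul_inv_cancel_right]
    case ri =>
      intro p hp
      obtain ⟨k, σ⟩ := p
      dsimp only
      set π := extLast m σ * ((finRotate (m+2)) ^ ((k : ℕ) + 1))⁻¹ with hπ
      have hπk : π k = Fin.last (m+1) := by
        rw [hπ, Equiv.Perm.mul_apply, rot_pow_inv_of, extLast_last]
      have h1 : π⁻¹ (Fin.last (m+1)) = k := by
        rw [← hπk, Equiv.Perm.inv_apply_self]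
      simp only [h1]
      rw [inv_mul_cancel_right, shrink_extLast]
  rw [key, Finset.card_product, eulerianA]
  simp

lemma card_D_mul (m d : ℕ) :
    (Finset.univ.filter fun π : Equiv.Perm (Fin (m+2)) =>
        (cdSet (m+2) π).card = d ∧ Fin.last (m+1) ∈ cdSet (m+2) π).card * (m+2)
      = (Finset.univ.filter fun π : Equiv.Perm (Fin (m+2)) =>
          (cdSet (m+2) π).card = d).card * d := by
  have hrhs : (Finset.univ.filter fun π : Equiv.Perm (Fin (m+2)) =>
          (cdSet (m+2) π).card = d).card * d
      = ((Finset.univ.filter fun π : Equiv.Perm (Fin (m+2)) =>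
          (cdSet (m+2) π).card = d).sigma (fun π => cdSet (m+2) π)).card := by
    rw [Finset.card_sigma]
    rw [Finset.sum_congr rfl (fun π hπ => (Finset.mem_filter.mp hπ).2)]
    rw [Finset.sum_const, smul_eq_mul]
  have hlhs : (Finset.univ.filter fun π : Equiv.Perm (Fin (m+2)) =>
        (cdSet (m+2) π).card = d ∧ Fin.last (m+1) ∈ cdSet (m+2) π).card * (m+2)
      = ((Finset.univ.filter fun π : Equiv.Perm (Fin (m+2)) =>
          (cdSet (m+2) π).card = d ∧ Fin.last (m+1) ∈ cdSet (m+2) π) ×ˢ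
          (Finset.univ : Finset (Fin (m+2)))).card := by
    rw [Finset.card_product, Finset.card_univ, Fintype.card_fin]
  rw [hrhs, hlhs]
  refine Finset.card_bij'
    (fun q _ => ⟨q.1 * ((finRotate (m+2)) ^ ((q.2 : ℕ) + 1))⁻¹, q.2⟩)
    (fun p _ => (p.1 * (finRotate (m+2)) ^ ((p.2 : ℕ) + 1), p.2))
    ?hi ?hj ?li ?ri
  case hi =>
    intro q hq
    obtain ⟨ρ, j⟩ := q
    simp only [Finset.mem_product, Finset.mem_filter, Finset.mem_univ, true_and, and_true] at hq
    obtain ⟨hcard, hlast⟩ := hq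
    simp only [Finset.mem_sigma, Finset.mem_filter, Finset.mem_univ, true_and]
    constructor
    · rw [card_cdSet_mul (m+1) _ _ (rot_pow_inv_comm (m+1) _)]
      exact hcard
    · rw [mem_cdSet_mul (m+1) _ _ (rot_pow_inv_comm (m+1) _), rot_pow_inv_of]
      exact hlast
  case hj =>
    intro p hp
    obtain ⟨π, j⟩ := p
    simp only [Finset.mem_sigma, Finset.mem_filter, Finset.mem_univ, true_and] at hp
    obtain ⟨hcard, hj⟩ := hp
    simp only [Finset.mem_product, Finset.mem_filter, Finset.mem_univ, true_and, and_true]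
    constructor
    · rw [card_cdSet_mul (m+1) π _ (rot_pow_comm (m+1) _)]
      exact hcard
    · rw [mem_cdSet_mul (m+1) π _ (rot_pow_comm (m+1) _), rot_pow_last]
      exact hj
  case li =>
    intro q _
    obtain ⟨ρ, j⟩ := q
    dsimp only
    rw [inv_mul_cancel_right]
  case ri =>
    intro p _
    obtain ⟨π, j⟩ := p
    dsimp only
    rw [mul_inv_cancel_right]

lemma cond_iff (m d : ℕ) (hd : 1 ≤ d) (π : Equiv.Perm (Fin (m+1))) :
    (numCyclicDescents (m+1) π = d ∧ numDescents (m+1) π = d - 1)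
      ↔ ((cdSet (m+1) π).card = d ∧ Fin.last m ∈ cdSet (m+1) π) := by
  rw [cdSet_card, mem_last_cdSet_iff, numCyclicDescents]
  by_cases hc : hasCyclicDescentAtLast (m+1) π
  · rw [if_pos hc]
    constructor
    · rintro ⟨h1, _⟩; exact ⟨h1, hc⟩
    · rintro ⟨h1, _⟩; exact ⟨h1, by omega⟩
  · rw [if_neg hc]
    constructor
    · rintro ⟨h1, h2⟩; rw [add_zero] at h1; omega
    · rintro ⟨_, h2⟩; exact absurd h2 hc


/-- for `n > 1`, the number of permutations of `n` symbols with `d` cyclic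
descents and `d-1` descents is `d·A_{n-1,d}`. -/
theorem card_cyclicDescents_descents_eq_sub_one (n d : ℕ) (hn : 1 < n)
    (hd1 : 1 ≤ d) (hd2 : d ≤ n - 1) :
    (Finset.univ.filter (fun π : Equiv.Perm (Fin n) =>
        numCyclicDescents n π = d ∧ numDescents n π = d - 1)).card
      = d * eulerianA (n - 1) d := by
  obtain ⟨m, rfl⟩ : ∃ m, n = m + 2 := ⟨n - 2, by omega⟩
  have hfc : (Finset.univ.filter (fun π : Equiv.Perm (Fin (m+2)) =>
        numCyclicDescents (m+2) π = d ∧ numDescents (m+2) π = d - 1))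
      = (Finset.univ.filter fun π : Equiv.Perm (Fin (m+2)) =>
        (cdSet (m+2) π).card = d ∧ Fin.last (m+1) ∈ cdSet (m+2) π) := by
    apply Finset.filter_congr
    intro π _
    exact_mod_cast cond_iff (m+1) d hd1 π
  have hsub : (m : ℕ) + 2 - 1 = m + 1 := rfl
  rw [hfc]
  have h1 := card_D_mul m d
  have h2 := card_X m d hd1
  rw [h2] at h1
  have h3 : (Finset.univ.filter fun π : Equiv.Perm (Fin (m+2)) =>
        (cdSet (m+2) π).card = d ∧ Fin.last (m+1) ∈ cdSet (m+2) π).card * (m+2)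
      = (d * eulerianA (m+1) d) * (m+2) := by
    rw [h1]; ring
  have h4 := Nat.eq_of_mul_eq_mul_right (show 0 < m + 2 by omega) h3
  rw [hsub]
  exact h4
end

section
/- For n > 1 and any integer d with 1 ≤ d ≤ n−1, the number of permutations π of {1,…,n} with cd(π) = d and d(π) = d equals (n−d)·A_{n−1,d}. -/
/-! Index positions by `ℤ/n` and let `D(π)` be the set of cyclic descent positions
`{i | π(i+1) < π(i)}`, so that `cd(π) = #D(π)` and `d(π) = #(D(π) \ {n})`: the permutations
counted are those with `#D(π) = d` and `n ∉ D(π)`.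
Every permutation is uniquely a rotation `i ↦ σ(i + k)` of a permutation `σ` fixing `n`, and
rotation by `k` translates `D` by `-k`. For `σ` fixing `n` (with `n > 1`), `D(σ)` is the descent
set of `σ` restricted to `{1, …, n-1}` together with `n` itself, so `#D(σ) = d(σ|) + 1`. Hence
each of the `A_{n-1,d}` permutations `σ|` with `d - 1` descents contributes exactly the `n - d`
rotations that bring a non-descent position of `σ` to `n`. -/

open Finset Equiv

variable {m : ℕ}

def cyclicDescentSet (π : Perm (Fin (m + 1))) : Finset (Fin (m + 1)) :=
  {i | π (i + 1) < π i}

lemma numDescents_eq_card_erase_last (π : Perm (Fin (m + 1))) :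
    numDescents (m + 1) π = #((cyclicDescentSet π).erase (Fin.last m)) := by
  unfold numDescents cyclicDescentSet
  refine card_bij' (fun i hi => ⟨i, by
    have := (mem_filter.1 hi).1; rw [mem_range] at this; omega⟩) (fun j _ => j) ?_ ?_
    (fun _ _ => rfl) (fun _ _ => rfl)
  · intro i hi
    obtain ⟨him, _, hlt⟩ := mem_filter.1 hi
    have hlast : (⟨i, by omega⟩ : Fin (m + 1)) < Fin.last m := by
      rw [mem_range, Nat.add_sub_cancel] at him; exact him
    have hsucc : (⟨i, by omega⟩ + 1 : Fin (m + 1)) = ⟨i + 1, by omega⟩ :=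
      Fin.ext (Fin.val_add_one_of_lt hlast)
    simp only [mem_erase, mem_filter, mem_univ, true_and, hsucc]
    exact ⟨hlast.ne, hlt⟩
  · intro j hj
    obtain ⟨hne, -, hlt⟩ := mem_erase.1 hj |>.imp_right mem_filter.1
    have hlast := Fin.lt_last_iff_ne_last.2 hne
    refine mem_filter.2 ⟨mem_range.2 (by simpa [Fin.lt_def] using hlast), by omega, ?_⟩
    convert hlt using 2
    exact Fin.ext (Fin.val_add_one_of_lt hlast).symm

lemma last_mem_cyclicDescentSet_iff (π : Perm (Fin (m + 1))) :
    Fin.last m ∈ cyclicDescentSet π ↔ hasCyclicDescentAtLast (m + 1) π := by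
  simp only [cyclicDescentSet, hasCyclicDescentAtLast, mem_filter, mem_univ, true_and,
    Fin.last_add_one, Nat.add_sub_cancel, Nat.zero_lt_succ, exists_true_left]
  rfl

lemma numCyclicDescents_eq_card (π : Perm (Fin (m + 1))) :
    numCyclicDescents (m + 1) π = #(cyclicDescentSet π) := by
  have h := last_mem_cyclicDescentSet_iff π
  rw [numCyclicDescents, numDescents_eq_card_erase_last]
  split_ifs with h'
  · exact card_erase_add_one (h.2 h')
  · rw [erase_eq_of_notMem (h.not.2 h'), add_zero]

lemma numCyclicDescents_eq_and_numDescents_eq_iff (π : Perm (Fin (m + 1))) (d : ℕ) :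
    numCyclicDescents (m + 1) π = d ∧ numDescents (m + 1) π = d ↔
      #(cyclicDescentSet π) = d ∧ Fin.last m ∉ cyclicDescentSet π := by
  rw [numCyclicDescents_eq_card, numDescents_eq_card_erase_last]
  by_cases h : Fin.last m ∈ cyclicDescentSet π
  · have := card_erase_add_one h
    simp only [h, not_true_eq_false, and_false, iff_false]
    omega
  · simp [h]

def rotate (k : Fin (m + 1)) (π : Perm (Fin (m + 1))) : Perm (Fin (m + 1)) :=
  π * Equiv.addRight k

@[simp]
lemma rotate_apply (k i : Fin (m + 1)) (π : Perm (Fin (m + 1))) : rotate k π i = π (i + k) :=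
  rfl

lemma mem_cyclicDescentSet_rotate (k i : Fin (m + 1)) (π : Perm (Fin (m + 1))) :
    i ∈ cyclicDescentSet (rotate k π) ↔ i + k ∈ cyclicDescentSet π := by
  simp [cyclicDescentSet, add_right_comm]

lemma card_cyclicDescentSet_rotate (k : Fin (m + 1)) (π : Perm (Fin (m + 1))) :
    #(cyclicDescentSet (rotate k π)) = #(cyclicDescentSet π) :=
  card_equiv (Equiv.addRight k) fun i => mem_cyclicDescentSet_rotate k i π

lemma card_filter_notMem_cyclicDescentSet_rotate (i : Fin (m + 1)) (π : Perm (Fin (m + 1))) :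
    #{k | i ∉ cyclicDescentSet (rotate k π)} = m + 1 - #(cyclicDescentSet π) := by
  calc #{k | i ∉ cyclicDescentSet (rotate k π)} = #(cyclicDescentSet π)ᶜ :=
        card_equiv (Equiv.addLeft i) fun k => by simp [mem_cyclicDescentSet_rotate]
    _ = m + 1 - #(cyclicDescentSet π) := by rw [card_compl, Fintype.card_fin]

def extendLast (τ : Perm (Fin m)) : Perm (Fin (m + 1)) :=
  finSuccEquivLast.symm.permCongr τ.optionCongr

@[simp]
lemma extendLast_castSucc (τ : Perm (Fin m)) (i : Fin m) :
    extendLast τ i.castSucc = (τ i).castSucc := by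
  simp [extendLast, permCongr_apply]

@[simp]
lemma extendLast_last (τ : Perm (Fin m)) : extendLast τ (Fin.last m) = Fin.last m := by
  simp [extendLast, permCongr_apply]

lemma extendLast_injective : Function.Injective (extendLast (m := m)) :=
  fun σ τ h => Equiv.ext fun i => by simpa using congr($h i.castSucc)

lemma numDescents_extendLast (τ : Perm (Fin m)) :
    numDescents (m + 1) (extendLast τ) = numDescents m τ := by
  have hcast (j : ℕ) (hj : j < m) : extendLast τ ⟨j, by omega⟩ = (τ ⟨j, hj⟩).castSucc :=
    extendLast_castSucc τ ⟨j, hj⟩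
  rcases m with _ | m
  · simp [numDescents]
  simp only [numDescents, Nat.add_sub_cancel, range_add_one, filter_insert]
  rw [if_neg]
  · refine congr_arg card (filter_congr fun i hi => ?_)
    have hi : i < m := mem_range.1 hi
    simp only [hcast (i + 1) (by omega), hcast i (by omega), Fin.castSucc_lt_castSucc_iff]
    exact ⟨fun ⟨_, h⟩ => ⟨by omega, h⟩, fun ⟨_, h⟩ => ⟨by omega, h⟩⟩
  · rintro ⟨_, h⟩
    change extendLast τ (Fin.last (m + 1)) < _ at h
    rw [hcast m (by omega), extendLast_last] at h
    exact (Fin.castSucc_lt_last _).not_gt h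

lemma card_cyclicDescentSet_extendLast (hm : 0 < m) (τ : Perm (Fin m)) :
    #(cyclicDescentSet (extendLast τ)) = numDescents m τ + 1 := by
  have hlast : Fin.last m ∈ cyclicDescentSet (extendLast τ) := by
    have hzero : (0 : Fin (m + 1)) = Fin.castSucc ⟨0, hm⟩ := Fin.ext (by simp)
    simp only [cyclicDescentSet, mem_filter, mem_univ, true_and, Fin.last_add_one, hzero,
      extendLast_castSucc, extendLast_last]
    exact Fin.castSucc_lt_last _
  rw [← card_erase_add_one hlast, ← numDescents_eq_card_erase_last, numDescents_extendLast]

lemma rotate_extendLast_bijective :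
    Function.Bijective fun p : Perm (Fin m) × Fin (m + 1) => rotate p.2 (extendLast p.1) := by
  rw [Fintype.bijective_iff_injective_and_card]
  refine ⟨?_, by simp [Fintype.card_perm, Nat.factorial_succ, mul_comm]⟩
  rintro ⟨σ, k⟩ ⟨τ, l⟩ h
  have hkl : k = l := by
    have h' := congr($h (Fin.last m - k))
    simp only [rotate_apply, sub_add_cancel, extendLast_last] at h'
    have := (extendLast τ).injective (h'.symm.trans (extendLast_last τ).symm)
    rw [sub_add_eq_add_sub, sub_eq_iff_eq_add] at this
    exact (add_left_cancel this).symm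
  subst hkl
  exact Prod.ext (extendLast_injective (mul_right_cancel h)) rfl

lemma card_filter_eq_sum_card_filter_rotate_extendLast (P : Perm (Fin (m + 1)) → Prop)
    [DecidablePred P] :
    #{π | P π} = ∑ τ : Perm (Fin m), #{k | P (rotate k (extendLast τ))} := by
  rw [← card_equiv (Equiv.ofBijective _ rotate_extendLast_bijective)
    (s := {p | P (rotate p.2 (extendLast p.1))}) (by simp)]
  simp only [card_filter, Fintype.sum_prod_type]

theorem card_cyclicDescents_descents_eq_general (n d : ℕ) (hn : 1 < n)
    (hd1 : 1 ≤ d) :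
    (Finset.univ.filter (fun π : Equiv.Perm (Fin n) =>
        numCyclicDescents n π = d ∧ numDescents n π = d)).card
      = (n - d) * eulerianA (n - 1) d := by
  obtain ⟨m, rfl⟩ : ∃ m, n = m + 1 := ⟨n - 1, by omega⟩
  have hm : 0 < m := by omega
  have hcount (τ : Perm (Fin m)) :
      #{k | #(cyclicDescentSet (rotate k (extendLast τ))) = d ∧
        Fin.last m ∉ cyclicDescentSet (rotate k (extendLast τ))} =
      if numDescents m τ = d - 1 then m + 1 - d else 0 := by
    have hcard := card_cyclicDescentSet_extendLast hm τ
    simp only [card_cyclicDescentSet_rotate, hcard]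
    split_ifs with h
    · simp only [show numDescents m τ + 1 = d by omega, true_and,
        card_filter_notMem_cyclicDescentSet_rotate, hcard]
    · simp only [show numDescents m τ + 1 ≠ d by omega, false_and, filter_false, card_empty]
  simp only [numCyclicDescents_eq_and_numDescents_eq_iff, Nat.add_sub_cancel]
  rw [card_filter_eq_sum_card_filter_rotate_extendLast]
  simp only [hcount, sum_ite, sum_const_zero, add_zero, sum_const, smul_eq_mul, eulerianA,
    mul_comm]

/-- for `n > 1`, the number of permutations of `n` symbols with `d` cyclic
descents and `d` descents is `(n-d)·A_{n-1,d}`. -/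
theorem card_cyclicDescents_descents_eq (n d : ℕ) (hn : 1 < n)
    (hd1 : 1 ≤ d) (hd2 : d ≤ n - 1) :
    (Finset.univ.filter (fun π : Equiv.Perm (Fin n) =>
        numCyclicDescents n π = d ∧ numDescents n π = d)).card
      = (n - d) * eulerianA (n - 1) d :=
  card_cyclicDescents_descents_eq_general n d hn hd1
end

section
/- Let n ≥ 2, k ≥ 1, and let π ∈ S_n have no cyclic descent at n (so cd(π) = d(π)). Write d = d(π) and assume d ≤ k. Then C_{k,n}(π) − R_{k,n}(π) = d·(n+k−d−1)! / (k^n · n! · (k−d)!). -/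
/-- if `π` has no cyclic descent at `n` and `d = d(π) ≤ k`, then
`C_{k,n}(π) - R_{k,n}(π) = d·(n+k-d-1)! / (k^n·n!·(k-d)!)`. -/
theorem cutRiffle_sub_riffle_of_not_cyclicDescent (n k : ℕ) (hn : 2 ≤ n) (hk : 1 ≤ k)
    (π : Equiv.Perm (Fin n)) (hcd : ¬ hasCyclicDescentAtLast n π)
    (d : ℕ) (hd : d = numDescents n π) (hdk : d ≤ k) :
    cutRiffle k n π - riffle k n π
      = (d : ℝ) * (Nat.factorial (n + k - d - 1) : ℝ)
          / ((k : ℝ) ^ n * (Nat.factorial n : ℝ) * (Nat.factorial (k - d) : ℝ)) := by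

  have hdn : d ≤ n - 1 := by
    rw [hd]
    exact le_trans (Finset.card_filter_le _ _) (by simp)
  have hcds : numCyclicDescents n π = d := by
    simp [numCyclicDescents, hcd, hd]
  have hnpos : (0:ℝ) < n := by positivity
  have hkpos : (0:ℝ) < k := by exact_mod_cast hk
  unfold cutRiffle riffle
  rw [hcds, ← hd]
  rcases eq_or_lt_of_le hdk with hke | hke
  · -- k = d
    subst hke
    have hm : n + d - d - 1 = n - 1 := by omega
    rw [hm, Nat.choose_self, Nat.choose_eq_zero_of_lt (by omega)]
    have hdd : d - d = 0 := by omega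
    rw [hdd, Nat.factorial_zero]
    have hfn : (Nat.factorial n : ℝ) = n * Nat.factorial (n - 1) := by
      have : n = (n-1) + 1 := by omega
      rw [this, Nat.factorial_succ]; push_cast; ring_nf
    have hkn : (d:ℝ) ^ n = d * (d:ℝ) ^ (n - 1) := by
      conv_lhs => rw [show n = (n-1)+1 from by omega]
      rw [pow_succ]; ring
    have hfpos : (0:ℝ) < Nat.factorial (n-1) := by exact_mod_cast (Nat.factorial_pos _)
    rw [hfn, hkn]
    field_simp
    ring
  · -- d < k
    set m := n + k - d - 1 with hmdef
    have hmn : n ≤ m := by omega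
    have h1 : (m.choose (n-1) : ℝ) * Nat.factorial (n-1) * Nat.factorial (k-d) = Nat.factorial m := by
      have := Nat.choose_mul_factorial_mul_factorial (n := m) (k := n-1) (by omega)
      have hsub : m - (n-1) = k - d := by omega
      rw [hsub] at this
      exact_mod_cast this
    have h2 : (m.choose n : ℝ) * Nat.factorial n * Nat.factorial (k-d-1) = Nat.factorial m := by
      have := Nat.choose_mul_factorial_mul_factorial (n := m) (k := n) hmn
      have hsub : m - n = k - d - 1 := by omega
      rw [hsub] at this
      exact_mod_cast this
    have hfn : (Nat.factorial n : ℝ) = n * Nat.factorial (n - 1) := by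
      have : n = (n-1) + 1 := by omega
      rw [this, Nat.factorial_succ]; push_cast; ring_nf
    have hfkd : (Nat.factorial (k-d) : ℝ) = (k - d : ℕ) * Nat.factorial (k-d-1) := by
      have : k - d = (k-d-1) + 1 := by omega
      rw [this, Nat.factorial_succ]; push_cast; ring_nf
    have hkn : (k:ℝ) ^ n = k * (k:ℝ) ^ (n - 1) := by
      conv_lhs => rw [show n = (n-1)+1 from by omega]
      rw [pow_succ]; ring
    have hA : (m.choose (n-1) : ℝ) = Nat.factorial m / (Nat.factorial (n-1) * Nat.factorial (k-d)) := by
      field_simp [Nat.factorial_pos] at h1 ⊢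
      linarith [h1]
    have hB : (m.choose n : ℝ) = Nat.factorial m / (Nat.factorial n * Nat.factorial (k-d-1)) := by
      field_simp [Nat.factorial_pos] at h2 ⊢
      linarith [h2]
    rw [hA, hB, hfn, hfkd, hkn]
    have hf1 : (0:ℝ) < Nat.factorial (n-1) := by exact_mod_cast Nat.factorial_pos _
    have hf2 : (0:ℝ) < Nat.factorial (k-d-1) := by exact_mod_cast Nat.factorial_pos _
    have hkd : ((k - d : ℕ) : ℝ) = (k:ℝ) - d := by
      push_cast [Nat.cast_sub hdk]; ring
    rw [hkd]
    have hkdpos : (0:ℝ) < (k:ℝ) - d := by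
      have : (d:ℝ) < k := by exact_mod_cast hke
      linarith
    field_simp
    ring
end

section
/- For all integers n ≥ 2 and k ≥ 1, (1/n)·Σ_{j=1}^{n−1} j²·A_{n−1,j}·binom(n+k−j−1, n−1) = k^{n+1}/n − (n+1)·Σ_{s=1}^{k−2} s^n − 2·(k−1)^n − Σ_{s=1}^{k−1} s^{n−1} + (n−1)·(k−1)·Σ_{s=1}^{k−2} s^{n−1}. -/
/-!
Sum over permutations instead of Eulerian numbers. Worpitzky's identity
`∑_π C(x + n - 1 - des π, n) = x ^ n` holds because every word `w : Fin n → Fin x` has a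
unique permutation `π` (the one sorting `w` stably) such that `w ∘ π` is weakly increasing
and strictly increasing across the descents of `π`; adding to each entry the number of ascents
of `π` to its left turns these words bijectively into strictly increasing sequences in
`Fin (x + n - 1 - des π)`. The hockey-stick identity then gives the same sums with `C(·, n + 1)`
and `C(·, n + 2)`: they are `∑_{y<x} y ^ n` and `∑_{y<x} ∑_{z<y} z ^ n`. Finally, with
`N = k + n - j` we have `j = k - (N - n)` and `(N - r) C(N, r) = (r + 1) C(N, r + 1)`, so
`j ^ 2 C(N, n)` is a combination of `C(N, n)`, `C(N, n + 1)` and `C(N, n + 2)`.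
-/

open Finset

lemma cast_sub_mul_choose {R : Type*} [CommRing R] (N r : ℕ) :
    ((N : R) - r) * N.choose r = (r + 1) * N.choose (r + 1) := by
  rcases le_or_gt r N with h | h
  · have := congrArg (Nat.cast : ℕ → R) (Nat.choose_succ_right_eq N r)
    push_cast [Nat.cast_sub h] at this
    linear_combination -this
  · simp [Nat.choose_eq_zero_of_lt h, Nat.choose_eq_zero_of_lt (h.trans (lt_add_one r))]

lemma cast_sq_mul_choose {R : Type*} [CommRing R] {N r j k : ℕ} (h : j + N = k + r) :
    (j : R) ^ 2 * N.choose r = k ^ 2 * N.choose r + (r + 1) * (1 - 2 * k) * N.choose (r + 1)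
      + (r + 1) * (r + 2) * N.choose (r + 2) := by
  have hj : (j : R) = k - (N - r) := by
    have := congrArg (Nat.cast : ℕ → R) h
    push_cast at this
    linear_combination this
  have h1 := cast_sub_mul_choose (R := R) N r
  have h2 := cast_sub_mul_choose (R := R) N (r + 1)
  push_cast at h2
  rw [hj]
  linear_combination (N - r - 2 * k : R) * h1 + (r + 1 : R) * h2

lemma sum_range_add_choose_of_le {r a : ℕ} (ha : a ≤ r) (x : ℕ) :
    ∑ y ∈ range x, (y + a).choose r = (x + a).choose (r + 1) := by
  induction x with
  | zero => simp [Nat.choose_eq_zero_of_lt (Nat.lt_succ_of_le ha)]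
  | succ x ih => rw [sum_range_succ, ih, add_right_comm, Nat.choose_succ_succ', add_comm]

lemma sum_choose_succ_eq_sum_range {ι : Type*} (s : Finset ι) {a : ι → ℕ} {r : ℕ}
    (ha : ∀ i ∈ s, a i ≤ r) (x : ℕ) :
    ∑ i ∈ s, (x + a i).choose (r + 1) = ∑ y ∈ range x, ∑ i ∈ s, (y + a i).choose r := by
  rw [sum_comm]
  exact sum_congr rfl fun i hi => (sum_range_add_choose_of_le (ha i hi) x).symm

lemma sum_Icc_one_sub_one_eq_sum_range {M : Type*} [AddCommMonoid M] {f : ℕ → M} (hf : f 0 = 0)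
    (k : ℕ) :
    ∑ i ∈ Icc 1 (k - 1), f i = ∑ i ∈ range k, f i := by
  cases k with
  | zero => simp
  | succ k =>
    rw [sum_range_eq_add_Ico f (n := k + 1) (by omega), hf, zero_add, Nat.add_sub_cancel,
      ← Ico_add_one_right_eq_Icc]

lemma sum_range_succ_sum_range {R : Type*} [CommRing R] (f : ℕ → R) (c : ℕ) :
    ∑ y ∈ range (c + 1), ∑ z ∈ range y, f z = ∑ z ∈ range c, ((c : R) - z) * f z := by
  induction c with
  | zero => simp
  | succ c ih =>
    have hstep (z : ℕ) : ((c + 1 : ℕ) - z : R) * f z = (c - z) * f z + f z := by push_cast; ring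
    simp only [sum_range_succ _ (c + 1), ih, hstep, sum_add_distrib, sum_range_succ _ c]
    ring

namespace Worpitzky

variable {n : ℕ}

def IsCompatible {α : Type*} [Preorder α] (D : Finset (Fin n)) (y : Fin (n + 1) → α) : Prop :=
  ∀ i : Fin n, y i.castSucc ≤ y i.succ ∧ (i ∈ D → y i.castSucc < y i.succ)

lemma IsCompatible.monotone {α : Type*} [Preorder α] {D : Finset (Fin n)} {y : Fin (n + 1) → α}
    (hy : IsCompatible D y) : Monotone y :=
  Fin.monotone_iff_le_succ.2 fun i => (hy i).1

lemma isCompatible_comp_iff {α β : Type*} [Preorder α] [Preorder β] (D : Finset (Fin n))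
    (f : α ↪o β) (y : Fin (n + 1) → α) : IsCompatible D (f ∘ y) ↔ IsCompatible D y := by
  simp only [IsCompatible, Function.comp_apply, f.le_iff_le, f.lt_iff_lt]

def shift (D : Finset (Fin n)) (i : Fin (n + 1)) : ℕ := #{t ∈ Dᶜ | t.castSucc < i}

variable (D : Finset (Fin n))

lemma shift_zero : shift D 0 = 0 := by
  simp [shift]

lemma shift_succ (i : Fin n) : shift D i.succ = shift D i.castSucc + if i ∈ D then 0 else 1 := by
  have : ({t ∈ Dᶜ | t.castSucc < i.succ} : Finset (Fin n))
      = {t ∈ Dᶜ | t.castSucc < i.castSucc} ∪ {t ∈ Dᶜ | t = i} := by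
    ext t
    simp only [mem_union, mem_filter, Fin.castSucc_lt_succ_iff, Fin.castSucc_lt_castSucc_iff]
    constructor
    · rintro ⟨h, hle⟩; exact (hle.lt_or_eq).imp (⟨h, ·⟩) (⟨h, ·⟩)
    · rintro (⟨h, hlt⟩ | ⟨h, rfl⟩) <;> exact ⟨h, by order⟩
  rw [shift, shift, this, card_union_of_disjoint]
  · split_ifs with hi <;> simp [filter_eq', hi]
  · exact disjoint_filter.2 fun t _ h h' => (h' ▸ h).false

lemma shift_mono : Monotone (shift D) := fun _ _ hij =>
  card_le_card (monotone_filter_right _ fun _ _ ht => ht.trans_le hij)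

lemma shift_last : shift D (Fin.last n) = n - #D := by
  simp [shift, Fin.castSucc_lt_last, card_compl]

lemma strictMono_add_shift_iff (y : Fin (n + 1) → ℕ) :
    StrictMono (y + shift D) ↔ IsCompatible D y := by
  rw [Fin.strictMono_iff_lt_succ]
  refine forall_congr' fun i => ?_
  simp only [Pi.add_apply, shift_succ]
  split_ifs with hi <;> simp [hi] <;> omega

lemma shift_le_of_strictMono {g : Fin (n + 1) → ℕ} (hg : StrictMono g) : shift D ≤ g := by
  rw [Pi.le_def]
  intro i
  induction i using Fin.induction with
  | zero => simp [shift_zero]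
  | succ i ih =>
    have := hg (Fin.castSucc_lt_succ (i := i))
    rw [shift_succ]
    split_ifs <;> omega

lemma isCompatible_sub_shift {g : Fin (n + 1) → ℕ} (hg : StrictMono g) :
    IsCompatible D (g - shift D) := by
  rwa [← strictMono_add_shift_iff, tsub_add_cancel_of_le (shift_le_of_strictMono D hg)]

def compatibleEquiv (x : ℕ) :
    {y : Fin (n + 1) → Fin x // IsCompatible D y} ≃ (Fin (n + 1) ↪o Fin (x + (n - #D))) where
  toFun y := OrderEmbedding.ofStrictMono (fun i => ⟨y.1 i + shift D i, by
      have := shift_mono D (Fin.le_last i)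
      rw [shift_last] at this
      omega⟩)
    ((strictMono_add_shift_iff D _).2 ((isCompatible_comp_iff D (Fin.valOrderEmb x) _).2 y.2))
  invFun f := by
    have hf : StrictMono (Fin.val ∘ f) := Fin.val_strictMono.comp f.strictMono
    refine ⟨fun i => ⟨f i - shift D i, ?_⟩, ?_⟩
    · have hmono := (isCompatible_sub_shift D hf).monotone (Fin.le_last i)
      have hlast := (f (Fin.last n)).isLt
      have hshift := shift_le_of_strictMono D hf (Fin.last n)
      simp only [Pi.sub_apply, Function.comp_apply, shift_last] at hmono hshift
      omega
    · exact (isCompatible_comp_iff D (Fin.valOrderEmb x) _).1 (isCompatible_sub_shift D hf)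
  left_inv y := by ext; exact Nat.add_sub_cancel _ _
  right_inv f := by
    ext i
    exact Nat.sub_add_cancel (shift_le_of_strictMono D (Fin.val_strictMono.comp f.strictMono) i)

lemma card_isCompatible (x : ℕ) :
    Nat.card {y : Fin (n + 1) → Fin x // IsCompatible D y} = (x + (n - #D)).choose (n + 1) := by
  rw [Nat.card_congr ((compatibleEquiv D x).trans Set.powersetCard.ofFinEmbEquiv),
    Set.powersetCard.card, Nat.card_eq_fintype_card, Fintype.card_fin]

def descents (π : Equiv.Perm (Fin (n + 1))) : Finset (Fin n) := {i | π i.succ < π i.castSucc}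

lemma numDescents_eq_card_descents (π : Equiv.Perm (Fin (n + 1))) :
    numDescents (n + 1) π = #(descents π) := by
  symm
  refine card_bij (fun i _ => i.val) (fun i hi => ?_) (fun _ _ _ _ h => Fin.ext h) fun j hj => ?_
  · simp only [descents, mem_filter, mem_univ, true_and] at hi
    simp only [mem_filter, mem_range]
    exact ⟨i.isLt, by omega, hi⟩
  · simp only [mem_filter, mem_range] at hj
    obtain ⟨hjn, _, hlt⟩ := hj
    exact ⟨⟨j, hjn⟩, by simpa [descents] using hlt, rfl⟩

lemma sort_eq_iff_isCompatible {α : Type*} [LinearOrder α] (w : Fin (n + 1) → α)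
    (π : Equiv.Perm (Fin (n + 1))) :
    Tuple.sort w = π ↔ IsCompatible (descents π) (w ∘ π) := by
  rw [eq_comm, Tuple.eq_sort_iff', Fin.strictMono_iff_lt_succ]
  refine forall_congr' fun i => ?_
  have hne : π i.castSucc ≠ π i.succ := π.injective.ne (Fin.castSucc_lt_succ).ne
  have hdesc : π i.succ < π i.castSucc ↔ ¬ π i.castSucc < π i.succ :=
    ⟨lt_asymm, fun h => (not_lt.1 h).lt_of_ne hne.symm⟩
  change toLex (w (π i.castSucc), π i.castSucc) < toLex (w (π i.succ), π i.succ) ↔ _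
  simp only [Prod.Lex.toLex_lt_toLex', descents, mem_filter, mem_univ, true_and,
    Function.comp_apply, hdesc]
  exact and_congr_right fun hle => by rw [hle.lt_iff_ne, not_imp_not]

lemma card_sort_eq (x : ℕ) (π : Equiv.Perm (Fin (n + 1))) :
    Nat.card {w : Fin (n + 1) → Fin x // Tuple.sort w = π}
      = (x + (n - #(descents π))).choose (n + 1) := by
  rw [← card_isCompatible (descents π) x]
  exact Nat.card_congr
    (Equiv.subtypeEquiv (π.symm.arrowCongr (Equiv.refl _)) fun w => sort_eq_iff_isCompatible w π)

theorem sum_choose_eq_pow (x : ℕ) :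
    ∑ π : Equiv.Perm (Fin (n + 1)), (x + (n - numDescents (n + 1) π)).choose (n + 1)
      = x ^ (n + 1) := by
  calc _ = ∑ π, Nat.card {w : Fin (n + 1) → Fin x // Tuple.sort w = π} := by
        simp only [card_sort_eq, numDescents_eq_card_descents]
    _ = Nat.card (Fin (n + 1) → Fin x) := by
        rw [← Nat.card_congr (Equiv.sigmaFiberEquiv Tuple.sort), Nat.card_sigma]
    _ = x ^ (n + 1) := by simp

lemma numDescents_le (π : Equiv.Perm (Fin (n + 1))) : numDescents (n + 1) π ≤ n := by
  simpa [numDescents_eq_card_descents] using card_le_univ (descents π)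

theorem sum_choose_add_two_eq_sum_pow (x : ℕ) :
    ∑ π : Equiv.Perm (Fin (n + 1)), (x + (n - numDescents (n + 1) π)).choose (n + 2)
      = ∑ y ∈ range x, y ^ (n + 1) := by
  rw [sum_choose_succ_eq_sum_range _ (fun π _ => by omega)]
  simp only [sum_choose_eq_pow]

theorem sum_choose_add_three_eq_sum_sum_pow (x : ℕ) :
    ∑ π : Equiv.Perm (Fin (n + 1)), (x + (n - numDescents (n + 1) π)).choose (n + 3)
      = ∑ y ∈ range x, ∑ z ∈ range y, z ^ (n + 1) := by
  rw [sum_choose_succ_eq_sum_range _ (fun π _ => by omega)]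
  simp only [sum_choose_add_two_eq_sum_pow]

lemma sum_eulerianA_mul {R : Type*} [Semiring R] (f : ℕ → R) :
    ∑ j ∈ Icc 1 (n + 1), (eulerianA (n + 1) j : R) * f j
      = ∑ π : Equiv.Perm (Fin (n + 1)), f (numDescents (n + 1) π + 1) := by
  rw [← sum_fiberwise_of_maps_to (g := fun π => numDescents (n + 1) π + 1) (t := Icc 1 (n + 1))
    fun π _ => mem_Icc.2 ⟨by omega, by simpa using numDescents_le π⟩]
  refine sum_congr rfl fun j hj => ?_
  rw [sum_congr rfl fun π hπ => by rw [(mem_filter.1 hπ).2], sum_const, nsmul_eq_mul, eulerianA]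
  congr 3
  exact filter_congr fun π _ => by have := (mem_Icc.1 hj).1; omega

theorem sum_sq_succ_numDescents_mul_choose {R : Type*} [CommRing R] (x : ℕ) :
    ∑ π : Equiv.Perm (Fin (n + 1)),
        ((numDescents (n + 1) π + 1 : ℕ) : R) ^ 2
          * ((x + (n - numDescents (n + 1) π)).choose (n + 1) : R)
      = (x : R) ^ 2 * (x : R) ^ (n + 1)
        + (n + 2) * (1 - 2 * x) * ∑ y ∈ range x, (y : R) ^ (n + 1)
        + (n + 2) * (n + 3) * ∑ y ∈ range x, ∑ z ∈ range y, (z : R) ^ (n + 1) := by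
  have h0 := congrArg (Nat.cast : ℕ → R) (sum_choose_eq_pow (n := n) x)
  have h1 := congrArg (Nat.cast : ℕ → R) (sum_choose_add_two_eq_sum_pow (n := n) x)
  have h2 := congrArg (Nat.cast : ℕ → R) (sum_choose_add_three_eq_sum_sum_pow (n := n) x)
  push_cast at h0 h1 h2
  rw [sum_congr rfl fun π _ => cast_sq_mul_choose (j := numDescents (n + 1) π + 1) (k := x)
    (by have := numDescents_le π; omega)]
  simp only [sum_add_distrib, ← mul_sum, h0, h1, h2]
  push_cast
  ring

end Worpitzky

open Worpitzky in
/-- a closed form for `(1/n)·Σ_{j=1}^{n-1} j²·A_{n-1,j}·binom(n+k-j-1, n-1)`. -/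
theorem sum_jsq_eulerian_choose (n k : ℕ) (hn : 2 ≤ n) (hk : 1 ≤ k) :
    (1 / (n : ℝ)) * ∑ j ∈ Finset.Icc 1 (n - 1),
        (j : ℝ) ^ 2 * (eulerianA (n - 1) j : ℝ) * (Nat.choose (n + k - j - 1) (n - 1) : ℝ)
      = (k : ℝ) ^ (n + 1) / (n : ℝ)
        - ((n : ℝ) + 1) * ∑ s ∈ Finset.Icc 1 (k - 2), (s : ℝ) ^ n
        - 2 * ((k : ℝ) - 1) ^ n
        - ∑ s ∈ Finset.Icc 1 (k - 1), (s : ℝ) ^ (n - 1)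
        + ((n : ℝ) - 1) * ((k : ℝ) - 1) * ∑ s ∈ Finset.Icc 1 (k - 2), (s : ℝ) ^ (n - 1) := by
  obtain ⟨p, rfl⟩ : ∃ p, n = p + 2 := ⟨n - 2, by omega⟩
  obtain ⟨c, rfl⟩ : ∃ c, k = c + 1 := ⟨k - 1, by omega⟩
  have hdescents : ∑ j ∈ Icc 1 (p + 1),
        (j : ℝ) ^ 2 * (eulerianA (p + 1) j : ℝ) * ((p + 2 + (c + 1) - j - 1).choose (p + 1) : ℝ)
      = ∑ π : Equiv.Perm (Fin (p + 1)), ((numDescents (p + 1) π + 1 : ℕ) : ℝ) ^ 2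
          * ((c + 1 + (p - numDescents (p + 1) π)).choose (p + 1) : ℝ) := by
    calc _ = ∑ j ∈ Icc 1 (p + 1), (eulerianA (p + 1) j : ℝ)
            * ((j : ℝ) ^ 2 * ((p + 2 + (c + 1) - j - 1).choose (p + 1) : ℝ)) :=
          sum_congr rfl fun _ _ => by ring
      _ = _ := sum_eulerianA_mul _
      _ = _ := sum_congr rfl fun π _ => by
          rw [show p + 2 + (c + 1) - (numDescents (p + 1) π + 1) - 1
            = c + 1 + (p - numDescents (p + 1) π) by have := numDescents_le π; omega]
  rw [show p + 2 - 1 = p + 1 from rfl, hdescents, sum_sq_succ_numDescents_mul_choose,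
    sum_range_succ_sum_range, show c + 1 - 2 = c - 1 by omega, sum_Icc_one_sub_one_eq_sum_range,
    sum_Icc_one_sub_one_eq_sum_range, sum_Icc_one_sub_one_eq_sum_range, sum_range_succ]
  · simp only [sub_mul, sum_sub_distrib, ← mul_sum, ← pow_succ']
    field_simp
    push_cast
    ring
  -- the side conditions `(0 : ℝ) ^ m = 0` of `sum_Icc_one_sub_one_eq_sum_range`
  all_goals simp
end

section
/- For all integers n ≥ 2 and k ≥ 1, ||R_{k,n} − C_{k,n}|| ≤ n/(4k). -/
/-!
Rotations `π ↦ π ∘ (· + t)` preserve the number `c` of cyclic descents, and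
`riffle = cutRiffle * (1 + w / k)` where `w = n - c` if `π` has a cyclic descent at the end and
`w = -c` otherwise. On each rotation orbit exactly `c` of the `n` rotations have a cyclic descent
at the end, so `w` averages to `0` there (hence both measures have the same total mass) and `|w|`
averages to `2c(n - c)/n ≤ n/2`. The distance is therefore at most `n/(4k)` times the mass of
`riffle`, which is at most `1` by the injective half of Worpitzky's identity
`∑_π binom(n+k-d(π)-1, n) = k^n`.
-/

open Finset Equiv

lemma Fin.apply_add_sub_le_of_strictMono {n : ℕ} {f : Fin n → ℕ} (hf : StrictMono f)
    {i j : Fin n} (hij : i ≤ j) : f i + ((j : ℕ) - i) ≤ f j := by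
  have hcard := card_le_card_of_injOn f (s := Icc i j) (t := Icc (f i) (f j))
    (fun x hx => by
      simp only [coe_Icc, Set.mem_Icc] at hx ⊢
      exact ⟨hf.monotone hx.1, hf.monotone hx.2⟩)
    hf.injective.injOn
  rw [Fin.card_Icc, Nat.card_Icc] at hcard
  have := hf.monotone hij
  omega

lemma Fin.le_apply_of_strictMono {n : ℕ} {f : Fin n → ℕ} (hf : StrictMono f) (i : Fin n) :
    (i : ℕ) ≤ f i := by
  have h0 : f ⟨0, i.pos⟩ + ((i : ℕ) - 0) ≤ f i :=
    Fin.apply_add_sub_le_of_strictMono hf (Fin.mk_le_of_le_val (Nat.zero_le i))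
  omega

lemma Nat.cast_choose_succ_mul {R : Type*} [Ring R] (a m : ℕ) :
    (a.choose (m + 1) : R) * (m + 1) = a.choose m * (a - m) := by
  rcases le_or_gt m a with h | h
  · rw [← Nat.cast_sub h]
    exact_mod_cast congrArg (Nat.cast : ℕ → R) (Nat.choose_succ_right_eq a m)
  · simp [Nat.choose_eq_zero_of_lt h, Nat.choose_eq_zero_of_lt (h.trans m.lt_succ_self)]

lemma card_nsmul_sum_eq_sum_sum_mul {G ι M : Type*} [Group G] [Fintype G] [Fintype ι]
    [AddCommMonoid M] (f : G → M) (h : ι → G) :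
    Fintype.card ι • ∑ g, f g = ∑ g, ∑ i, f (g * h i) :=
  calc Fintype.card ι • ∑ g, f g = ∑ i : ι, ∑ g, f g := by rw [sum_const, card_univ]
    _ = ∑ i, ∑ g, f (g * h i) :=
      sum_congr rfl fun i _ => (Fintype.sum_equiv (Equiv.mulRight (h i)) _ _ fun _ => rfl).symm
    _ = ∑ g, ∑ i, f (g * h i) := sum_comm

lemma numDescents_le (n : ℕ) (π : Perm (Fin n)) : numDescents n π ≤ n - 1 :=
  (card_filter_le _ _).trans (card_range _).le

lemma numCyclicDescents_le {n : ℕ} (hn : 0 < n) (π : Perm (Fin n)) :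
    numCyclicDescents n π ≤ n := by
  have := numDescents_le n π
  unfold numCyclicDescents
  split_ifs <;> omega

lemma cutRiffle_nonneg (k n : ℕ) (π : Perm (Fin n)) : 0 ≤ cutRiffle k n π := by
  unfold cutRiffle; positivity

section Worpitzky

variable {n : ℕ} (π : Perm (Fin n))

def descentsBefore (i : ℕ) : ℕ :=
  #{j ∈ range i | ∃ h : j + 1 < n, π ⟨j + 1, h⟩ < π ⟨j, Nat.lt_of_succ_lt h⟩}

lemma descentsBefore_le (i : ℕ) : descentsBefore π i ≤ i :=
  (card_filter_le _ _).trans (card_range i).le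

lemma descentsBefore_mono : Monotone (descentsBefore π) :=
  fun _ _ hij => card_le_card (filter_subset_filter _ (range_subset_range.2 hij))

lemma descentsBefore_succ (i : ℕ) (h : i + 1 < n) :
    descentsBefore π (i + 1)
      = descentsBefore π i + if π ⟨i + 1, h⟩ < π ⟨i, Nat.lt_of_succ_lt h⟩ then 1 else 0 := by
  rw [descentsBefore, range_add_one, filter_insert]
  split_ifs with hd hd' hd'
  · rw [card_insert_of_notMem (by simp), descentsBefore]
  · exact absurd hd.2 hd'
  · exact absurd ⟨h, hd'⟩ hd
  · rfl

/-- Choosing `n` of the `n + k - d(π) - 1` slots at positions `s 0 < ⋯ < s (n-1)` sends card `i` of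
`π` to pile `s i - (i - descentsBefore π i)`. Pile labels are below `k`, weakly increasing, and
strictly increasing at descents of `π`; so the word `pileLabel π s ∘ π⁻¹` recovers `π` by
sorting its positions by label (ties in increasing order), and then `s`. -/
def pileLabel (s : Fin n → ℕ) (i : Fin n) : ℕ := s i + descentsBefore π i - i

lemma pileLabel_lt {s : Fin n → ℕ} (hs : StrictMono s) {k : ℕ}
    (hsk : ∀ i, s i < n + k - numDescents n π - 1) (i : Fin n) : pileLabel π s i < k := by
  have hn : 0 < n := i.pos
  have hlast : s i + (n - 1 - i) ≤ s ⟨n - 1, by omega⟩ :=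
    Fin.apply_add_sub_le_of_strictMono hs (j := ⟨n - 1, by omega⟩)
      (Fin.le_iff_val_le_val.2 (Nat.le_sub_one_of_lt i.isLt))
  have hlast_lt := hsk ⟨n - 1, by omega⟩
  have hi := Fin.le_apply_of_strictMono hs i
  have hd : descentsBefore π i ≤ numDescents n π := descentsBefore_mono π (by omega)
  unfold pileLabel
  omega

lemma strictMono_toLex_pileLabel {s : Fin n → ℕ} (hs : StrictMono s) :
    StrictMono fun i => toLex (pileLabel π s i, π i) := by
  cases n with
  | zero => exact fun i => i.elim0
  | succ m =>
  refine Fin.strictMono_iff_lt_succ.2 fun i => Prod.Lex.toLex_lt_toLex.2 ?_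
  have hstep := hs (Fin.castSucc_lt_succ (i := i))
  have hi := Fin.le_apply_of_strictMono hs i.castSucc
  have hle := descentsBefore_le π i
  have hd : descentsBefore π (i + 1)
      = descentsBefore π i + if π i.succ < π i.castSucc then 1 else 0 :=
    descentsBefore_succ π i i.succ.isLt
  by_cases hdesc : π i.succ < π i.castSucc
  · left
    simp only [pileLabel, Fin.val_castSucc, Fin.val_succ, hd, if_pos hdesc] at hi ⊢
    omega
  · have hπ : π i.castSucc < π i.succ :=
      lt_of_le_of_ne (not_lt.1 hdesc) (π.injective.ne Fin.castSucc_lt_succ.ne)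
    have hlabel : pileLabel π s i.castSucc ≤ pileLabel π s i.succ := by
      simp only [pileLabel, Fin.val_castSucc, Fin.val_succ, hd, if_neg hdesc] at hi ⊢
      omega
    exact hlabel.lt_or_eq.imp id fun h => ⟨h, hπ⟩

lemma pileLabel_injective {s s' : Fin n → ℕ} (hs : StrictMono s) (hs' : StrictMono s')
    (h : pileLabel π s = pileLabel π s') : s = s' := by
  funext i
  have hi := Fin.le_apply_of_strictMono hs i
  have hi' := Fin.le_apply_of_strictMono hs' i
  have hle := descentsBefore_le π i
  have := congrFun h i
  unfold pileLabel at this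
  omega

lemma eq_of_pileLabel_comp_symm_eq {π π' : Perm (Fin n)} {s s' : Fin n → ℕ}
    (hs : StrictMono s) (hs' : StrictMono s')
    (h : pileLabel π s ∘ π.symm = pileLabel π' s' ∘ π'.symm) : π = π' := by
  set key : Fin n → ℕ ×ₗ Fin n := fun j => toLex ((pileLabel π s ∘ π.symm) j, j)
  have hkey : key ∘ π = fun i => toLex (pileLabel π s i, π i) := by
    funext i; simp [key]
  have hkey' : key ∘ π' = fun i => toLex (pileLabel π' s' i, π' i) := by
    funext i
    change toLex ((pileLabel π s ∘ π.symm) (π' i), π' i) = _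
    rw [h]
    simp
  have hrange : key ∘ π = key ∘ π' := by
    rw [← StrictMono.range_inj, π.surjective.range_comp, π'.surjective.range_comp]
    · exact hkey ▸ strictMono_toLex_pileLabel π hs
    · exact hkey' ▸ strictMono_toLex_pileLabel π' hs'
  ext i
  exact congrArg Fin.val (congrArg (fun x => (ofLex x).2) (congrFun hrange i))

end Worpitzky

lemma sum_choose_numDescents_le (n k : ℕ) :
    ∑ π : Perm (Fin n), (n + k - numDescents n π - 1).choose n ≤ k ^ n := by
  let Deck := Σ π : Perm (Fin n), {S : Finset (Fin (n + k - numDescents n π - 1)) // #S = n}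
  let slots (x : Deck) (i : Fin n) : ℕ := x.2.1.orderEmbOfFin x.2.2 i
  have hslots (x : Deck) : StrictMono (slots x) :=
    Fin.val_strictMono.comp (x.2.1.orderEmbOfFin x.2.2).strictMono
  let word (x : Deck) (j : Fin n) : Fin k :=
    ⟨pileLabel x.1 (slots x) (x.1.symm j),
      pileLabel_lt x.1 (hslots x) (fun i => (x.2.1.orderEmbOfFin x.2.2 i).isLt) _⟩
  have hword : Function.Injective word := by
    rintro ⟨π, S, hS⟩ ⟨π', S', hS'⟩ h
    have hlabel : pileLabel π (slots ⟨π, S, hS⟩) ∘ π.symm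
        = pileLabel π' (slots ⟨π', S', hS'⟩) ∘ π'.symm :=
      funext fun j => congrArg Fin.val (congrFun h j)
    obtain rfl := eq_of_pileLabel_comp_symm_eq (hslots _) (hslots _) hlabel
    have hslot := pileLabel_injective π (hslots _) (hslots _)
      (π.symm.surjective.injective_comp_right hlabel)
    obtain rfl : S = S' := by
      rw [← coe_inj, ← range_orderEmbOfFin S hS, ← range_orderEmbOfFin S' hS']
      exact congrArg Set.range (funext fun i => Fin.ext (congrFun hslot i))
    rfl
  simpa [Deck, Fintype.card_sigma, Fintype.card_finset_len] using
    Fintype.card_le_of_injective word hword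

lemma sum_riffle_le_one (k n : ℕ) : ∑ π : Perm (Fin n), riffle k n π ≤ 1 := by
  simp only [riffle, ← sum_div]
  exact div_le_one_of_le₀ (by exact_mod_cast sum_choose_numDescents_le n k) (by positivity)

noncomputable def riffleExcess (n : ℕ) (π : Perm (Fin n)) : ℝ :=
  if hasCyclicDescentAtLast n π then n - numCyclicDescents n π else -numCyclicDescents n π

lemma riffle_sub_cutRiffle {n k : ℕ} (hn : 0 < n) (hk : 0 < k) (π : Perm (Fin n)) :
    riffle k n π - cutRiffle k n π = cutRiffle k n π * riffleExcess n π / k := by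
  obtain ⟨m, rfl⟩ : ∃ m, n = m + 1 := ⟨n - 1, by omega⟩
  have hc := numCyclicDescents_le hn π
  simp only [riffle, cutRiffle, riffleExcess, Nat.add_sub_cancel, pow_succ]
  set c := numCyclicDescents (m + 1) π with hc_def
  have hkR : (0 : ℝ) < k := by exact_mod_cast hk
  have ha : ((m + k - c : ℕ) : ℝ) = m + k - c := by
    push_cast [show c ≤ m + k by omega]; ring
  rw [show m + 1 + k - c - 1 = m + k - c by omega]
  push_cast
  by_cases h : hasCyclicDescentAtLast (m + 1) π
  · have hd : numDescents (m + 1) π + 1 = c := by simp [hc_def, numCyclicDescents, h]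
    rw [if_pos h, show m + 1 + k - numDescents (m + 1) π - 1 = m + k - c + 1 by omega]
    have key : ((m + k - c + 1 : ℕ).choose (m + 1) : ℝ) * (m + 1)
        = ((m + k - c : ℕ) + 1) * (m + k - c : ℕ).choose m := by
      exact_mod_cast (Nat.add_one_mul_choose_eq (m + k - c) m).symm
    rw [ha] at key
    field_simp
    linear_combination key
  · have hd : numDescents (m + 1) π = c := by simp [hc_def, numCyclicDescents, h]
    rw [if_neg h, show m + 1 + k - numDescents (m + 1) π - 1 = m + k - c by omega]
    have key := Nat.cast_choose_succ_mul (R := ℝ) (m + k - c) m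
    rw [ha] at key
    field_simp
    linear_combination key

section Rotation

variable {m : ℕ} (π : Perm (Fin (m + 1)))

def cyclicDescents : Finset (Fin (m + 1)) := {i | π (i + 1) < π i}

@[simp]
lemma mem_cyclicDescents (i : Fin (m + 1)) : i ∈ cyclicDescents π ↔ π (i + 1) < π i := by
  simp [cyclicDescents]

lemma hasCyclicDescentAtLast_iff :
    hasCyclicDescentAtLast (m + 1) π ↔ Fin.last m ∈ cyclicDescents π := by
  rw [mem_cyclicDescents, Fin.last_add_one]
  exact ⟨fun ⟨_, h⟩ => h, fun h => ⟨m.succ_pos, h⟩⟩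

lemma numCyclicDescents_eq_card_cyclicDescents :
    numCyclicDescents (m + 1) π = #(cyclicDescents π) := by
  have hdesc :
      numDescents (m + 1) π = ∑ i : Fin m, if π i.succ < π i.castSucc then 1 else 0 := by
    rw [numDescents, card_filter, Nat.add_sub_cancel, ← Fin.sum_univ_eq_sum_range]
    exact sum_congr rfl fun i _ => if_congr ⟨fun ⟨_, h⟩ => h, fun h => ⟨by omega, h⟩⟩ rfl rfl
  rw [numCyclicDescents, hdesc, cyclicDescents, card_filter, Fin.sum_univ_castSucc]
  simp only [Fin.coeSucc_eq_succ]
  exact congrArg _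
    (if_congr ((hasCyclicDescentAtLast_iff π).trans (mem_cyclicDescents π _)) rfl rfl)

lemma mem_cyclicDescents_mul_addRight (t i : Fin (m + 1)) :
    i ∈ cyclicDescents (π * Equiv.addRight t) ↔ i + t ∈ cyclicDescents π := by
  simp [add_right_comm]

lemma numCyclicDescents_mul_addRight (t : Fin (m + 1)) :
    numCyclicDescents (m + 1) (π * Equiv.addRight t) = numCyclicDescents (m + 1) π := by
  simp only [numCyclicDescents_eq_card_cyclicDescents]
  exact card_equiv (Equiv.addRight t) (mem_cyclicDescents_mul_addRight π t)

lemma sum_ite_hasCyclicDescentAtLast_mul_addRight {R : Type*} [Ring R] (a b : R) :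
    ∑ t, (if hasCyclicDescentAtLast (m + 1) (π * Equiv.addRight t) then a else b)
      = numCyclicDescents (m + 1) π * a + (m + 1 - numCyclicDescents (m + 1) π) * b := by
  have hcard : #{t | hasCyclicDescentAtLast (m + 1) (π * Equiv.addRight t)}
      = numCyclicDescents (m + 1) π := by
    rw [numCyclicDescents_eq_card_cyclicDescents]
    refine card_equiv (Equiv.addLeft (Fin.last m)) fun t => ?_
    rw [mem_filter_univ, hasCyclicDescentAtLast_iff, mem_cyclicDescents_mul_addRight]
    rfl
  have hcard_not : (#{t | ¬hasCyclicDescentAtLast (m + 1) (π * Equiv.addRight t)} : R)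
      = m + 1 - numCyclicDescents (m + 1) π := by
    have hsplit := card_filter_add_card_filter_not (s := univ)
      (fun t => hasCyclicDescentAtLast (m + 1) (π * Equiv.addRight t))
    rw [card_univ, Fintype.card_fin, hcard] at hsplit
    rw [eq_sub_iff_add_eq']
    exact_mod_cast congrArg (Nat.cast : ℕ → R) hsplit
  rw [sum_ite, sum_const, sum_const, hcard, nsmul_eq_mul, nsmul_eq_mul, hcard_not]

lemma sum_riffleExcess_mul_addRight :
    ∑ t, riffleExcess (m + 1) (π * Equiv.addRight t) = 0 := by
  simp only [riffleExcess, numCyclicDescents_mul_addRight,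
    sum_ite_hasCyclicDescentAtLast_mul_addRight]
  push_cast
  ring

lemma sum_abs_riffleExcess_mul_addRight_le :
    ∑ t, |riffleExcess (m + 1) (π * Equiv.addRight t)| ≤ (m + 1) ^ 2 / 2 := by
  have hc : (numCyclicDescents (m + 1) π : ℝ) ≤ m + 1 := by
    exact_mod_cast numCyclicDescents_le m.succ_pos π
  simp only [riffleExcess, numCyclicDescents_mul_addRight, apply_ite abs, abs_neg, Nat.abs_cast,
    Nat.cast_add, Nat.cast_one, abs_of_nonneg (sub_nonneg.2 hc),
    sum_ite_hasCyclicDescentAtLast_mul_addRight]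
  nlinarith [sq_nonneg ((m + 1 : ℝ) - 2 * numCyclicDescents (m + 1) π)]

lemma cutRiffle_mul_addRight (k : ℕ) (t : Fin (m + 1)) :
    cutRiffle k (m + 1) (π * Equiv.addRight t) = cutRiffle k (m + 1) π := by
  rw [cutRiffle, cutRiffle, numCyclicDescents_mul_addRight]

end Rotation

lemma sum_cutRiffle_mul_riffleExcess (k m : ℕ) :
    ∑ π : Perm (Fin (m + 1)), cutRiffle k (m + 1) π * riffleExcess (m + 1) π = 0 := by
  have h := card_nsmul_sum_eq_sum_sum_mul
    (fun π => cutRiffle k (m + 1) π * riffleExcess (m + 1) π) Equiv.addRight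
  simp only [cutRiffle_mul_addRight, ← mul_sum, sum_riffleExcess_mul_addRight, mul_zero,
    sum_const_zero, Fintype.card_fin, smul_eq_zero] at h
  exact h.resolve_left m.succ_ne_zero

lemma sum_cutRiffle_mul_abs_riffleExcess_le (k m : ℕ) :
    ∑ π : Perm (Fin (m + 1)), cutRiffle k (m + 1) π * |riffleExcess (m + 1) π|
      ≤ (m + 1) / 2 * ∑ π, cutRiffle k (m + 1) π := by
  have h := card_nsmul_sum_eq_sum_sum_mul
    (fun π => cutRiffle k (m + 1) π * |riffleExcess (m + 1) π|) Equiv.addRight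
  simp only [cutRiffle_mul_addRight, ← mul_sum, Fintype.card_fin, nsmul_eq_mul] at h
  refine le_of_mul_le_mul_left ?_ (by positivity : (0 : ℝ) < m + 1)
  calc (m + 1 : ℝ) * ∑ π, cutRiffle k (m + 1) π * |riffleExcess (m + 1) π|
      = ∑ π, cutRiffle k (m + 1) π * ∑ t, |riffleExcess (m + 1) (π * Equiv.addRight t)| := by
        exact_mod_cast h
    _ ≤ ∑ π, cutRiffle k (m + 1) π * ((m + 1) ^ 2 / 2) := by
        gcongr with π
        · exact cutRiffle_nonneg k _ π
        · exact sum_abs_riffleExcess_mul_addRight_le π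
    _ = (m + 1) * ((m + 1) / 2 * ∑ π, cutRiffle k (m + 1) π) := by
        rw [← sum_mul, mul_comm]; ring

/-- `||R_{k,n} - C_{k,n}|| ≤ n/(4k)`. -/
theorem totalVariation_riffle_cutRiffle_le (n k : ℕ) (hn : 2 ≤ n) (hk : 1 ≤ k) :
    (1 / 2) * ∑ π : Equiv.Perm (Fin n), |riffle k n π - cutRiffle k n π|
      ≤ (n : ℝ) / (4 * (k : ℝ)) := by
  obtain ⟨m, rfl⟩ : ∃ m, n = m + 1 := ⟨n - 1, by omega⟩
  have hdiff (π : Perm (Fin (m + 1))) := riffle_sub_cutRiffle (by omega) hk π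
  have hmass : ∑ π, riffle k (m + 1) π = ∑ π, cutRiffle k (m + 1) π := by
    rw [← sub_eq_zero, ← sum_sub_distrib]
    simp only [hdiff, ← sum_div, sum_cutRiffle_mul_riffleExcess, zero_div]
  calc (1 / 2) * ∑ π, |riffle k (m + 1) π - cutRiffle k (m + 1) π|
      = (1 / 2) * ((∑ π, cutRiffle k (m + 1) π * |riffleExcess (m + 1) π|) / k) := by
        simp only [hdiff, abs_div, abs_mul, abs_of_nonneg (cutRiffle_nonneg k _ _), Nat.abs_cast,
          sum_div]
    _ ≤ (1 / 2) * ((m + 1) / 2 * (∑ π, cutRiffle k (m + 1) π) / k) := by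
        gcongr; exact sum_cutRiffle_mul_abs_riffleExcess_le k m
    _ = (1 / 2) * ((m + 1) / 2 * (∑ π, riffle k (m + 1) π) / k) := by rw [hmass]
    _ ≤ (1 / 2) * ((m + 1) / 2 * 1 / k) := by gcongr; exact sum_riffle_le_one k (m + 1)
    _ = ((m + 1 : ℕ) : ℝ) / (4 * k) := by push_cast; ring
end

section
/- For all integers n ≥ 2, k ≥ 1, and any i ∈ {1,…,n}, under the cut-then-k-riffle-shuffle measure the position of card i is perfectly random: for every j ∈ {1,…,n}, Σ_{π ∈ S_n with π(i)=j} C_{k,n}(π) = 1/n. -/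
namespace CutRiffleAux

open Finset

/-- adjacent strict implies strict mono on `Fin M`. -/
lemma strictMono_of_adj {M : ℕ} {α : Type*} [Preorder α] {f : Fin M → α}
    (h : ∀ t, ∀ ht : t + 1 < M, f ⟨t, Nat.lt_of_succ_lt ht⟩ < f ⟨t + 1, ht⟩) :
    StrictMono f := by
  have key : ∀ d (i j : Fin M), i.val + d + 1 = j.val → f i < f j := by
    intro d
    induction d with
    | zero =>
      intro i j hij
      have ht : i.val + 1 < M := by omega
      have h1 := h i.val ht
      have hi : (⟨i.val, Nat.lt_of_succ_lt ht⟩ : Fin M) = i := by ext; rfl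
      have hj : (⟨i.val + 1, ht⟩ : Fin M) = j := by ext; simp; omega
      rwa [hi, hj] at h1
    | succ d ih =>
      intro i j hij
      have hmid : i.val + d + 1 < M := by omega
      have h1 := ih i ⟨i.val + d + 1, hmid⟩ rfl
      refine h1.trans ?_
      have ht : (i.val + d + 1) + 1 < M := by omega
      have h2 := h (i.val + d + 1) ht
      have hj : (⟨i.val + d + 1 + 1, ht⟩ : Fin M) = j := by ext; simp; omega
      have hmid' : (⟨i.val + d + 1, Nat.lt_of_succ_lt ht⟩ : Fin M) = ⟨i.val + d + 1, hmid⟩ := rfl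
      rwa [hj, hmid'] at h2
  intro i j hij
  exact key (j.val - i.val - 1) i j (by have := hij; rw [Fin.lt_def] at this; omega)

lemma monotone_of_adj {M : ℕ} {α : Type*} [Preorder α] {f : Fin M → α}
    (h : ∀ t, ∀ ht : t + 1 < M, f ⟨t, Nat.lt_of_succ_lt ht⟩ ≤ f ⟨t + 1, ht⟩) :
    Monotone f := by
  have key : ∀ d (i j : Fin M), i.val + d = j.val → f i ≤ f j := by
    intro d
    induction d with
    | zero =>
      intro i j hij
      have : i = j := by ext; omega
      rw [this]
    | succ d ih =>
      intro i j hij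
      have hmid : i.val + d < M := by omega
      have h1 := ih i ⟨i.val + d, hmid⟩ rfl
      refine h1.trans ?_
      have ht : (i.val + d) + 1 < M := by omega
      have h2 := h (i.val + d) ht
      have hj : (⟨i.val + d + 1, ht⟩ : Fin M) = j := by ext; simp; omega
      rwa [hj] at h2
  intro i j hij
  exact key (j.val - i.val) i j (by rw [Fin.le_def] at hij; omega)

lemma strictMono_chain {M N : ℕ} {h : Fin M → Fin N} (hs : StrictMono h) :
    ∀ d (i j : Fin M), i.val + d = j.val → (h i).val + d ≤ (h j).val := by
  intro d
  induction d with
  | zero => intro i j hij; have : i = j := by ext; omega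
            rw [this]; omega
  | succ d ih =>
    intro i j hij
    have hmid : i.val + d < M := by omega
    have h1 := ih i ⟨i.val + d, hmid⟩ rfl
    have h2 : h ⟨i.val + d, hmid⟩ < h j := hs (by rw [Fin.lt_def]; simp; omega)
    rw [Fin.lt_def] at h2
    omega

lemma card_strictMono (M N : ℕ) :
    ((univ : Finset (Fin M → Fin N)).filter (fun h => StrictMono h)).card = N.choose M := by
  classical
  have : N.choose M = ((univ : Finset (Fin N)).powersetCard M).card := by
    rw [Finset.card_powersetCard, card_univ, Fintype.card_fin]
  rw [this]
  apply Finset.card_bij (fun h _ => Finset.image h univ)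
  · intro h hh
    rw [Finset.mem_filter] at hh
    rw [Finset.mem_powersetCard]
    exact ⟨Finset.subset_univ _,
      by rw [Finset.card_image_of_injective _ hh.2.injective, card_univ, Fintype.card_fin]⟩
  · intro h1 hh1 h2 hh2 heq
    rw [Finset.mem_filter] at hh1 hh2
    have hc1 : (Finset.image h1 univ).card = M := by
      rw [Finset.card_image_of_injective _ hh1.2.injective, card_univ, Fintype.card_fin]
    have e1 : h1 = (Finset.image h1 univ).orderEmbOfFin hc1 :=
      Finset.orderEmbOfFin_unique hc1 (fun x => Finset.mem_image_of_mem _ (mem_univ x)) hh1.2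
    have e2 : h2 = (Finset.image h1 univ).orderEmbOfFin hc1 :=
      Finset.orderEmbOfFin_unique hc1
        (fun x => heq ▸ Finset.mem_image_of_mem _ (mem_univ x)) hh2.2
    rw [e1, e2]
  · intro s hs
    rw [Finset.mem_powersetCard] at hs
    refine ⟨⇑(s.orderEmbOfFin hs.2), Finset.mem_filter.mpr ⟨mem_univ _, (s.orderEmbOfFin hs.2).strictMono⟩, ?_⟩
    apply Finset.coe_injective
    rw [Finset.coe_image, Finset.coe_univ, Set.image_univ, Finset.range_orderEmbOfFin]

lemma count_mono (M k : ℕ) (hk : 1 ≤ k) (D : Finset ℕ) (hD : ∀ t ∈ D, t + 1 < M) :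
    ((univ : Finset (Fin M → Fin k)).filter
        (fun g => Monotone g ∧ ∀ t ∈ D, ∀ ht : t + 1 < M,
          g ⟨t, Nat.lt_of_succ_lt ht⟩ < g ⟨t + 1, ht⟩)).card
      = (k + M - 1 - D.card).choose M := by
  classical
  -- basic facts about the offset counters
  have hDsub : D ⊆ Finset.range (M - 1) := by
    intro t ht; rw [Finset.mem_range]; have := hD t ht; omega
  have hDcard : D.card ≤ M - 1 := by
    calc D.card ≤ (Finset.range (M - 1)).card := Finset.card_le_card hDsub
    _ = M - 1 := Finset.card_range _
  have fact1 : ∀ i : ℕ, (D ∩ Finset.range i).card ≤ i := fun i => by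
    calc (D ∩ Finset.range i).card ≤ (Finset.range i).card :=
          Finset.card_le_card (Finset.inter_subset_right)
    _ = i := Finset.card_range _
  have factD : ∀ i : ℕ, (D ∩ Finset.range i).card ≤ D.card := fun i =>
    Finset.card_le_card Finset.inter_subset_left
  have fact2 : ∀ t ∈ D, (D ∩ Finset.range (t + 1)).card = (D ∩ Finset.range t).card + 1 := by
    intro t ht
    rw [Finset.range_add_one, Finset.inter_comm, Finset.insert_inter_of_mem ht,
      Finset.card_insert_of_notMem (by simp), Finset.inter_comm]
  have fact3 : ∀ t ∉ D, (D ∩ Finset.range (t + 1)).card = (D ∩ Finset.range t).card := by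
    intro t ht
    rw [Finset.range_add_one, Finset.inter_comm, Finset.insert_inter_of_notMem ht,
      Finset.inter_comm]
  have fact4 : ∀ i : ℕ, i < M → D.card ≤ (M - 1 - i) + (D ∩ Finset.range i).card := by
    intro i hi
    have hsplit : (D ∩ Finset.range i).card + (D \ Finset.range i).card = D.card :=
      Finset.card_inter_add_card_sdiff D (Finset.range i)
    have hsub2 : (D \ Finset.range i) ⊆ Finset.Ico i (M - 1) := by
      intro x hx
      rw [Finset.mem_sdiff, Finset.mem_range] at hx
      rw [Finset.mem_Ico]
      have := hD x hx.1
      omega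
    have := Finset.card_le_card hsub2
    rw [Nat.card_Ico] at this
    omega
  have chain0 : ∀ (h : Fin M → Fin (k + M - 1 - D.card)), StrictMono h →
      ∀ i : Fin M, i.val ≤ (h i).val := by
    intro h hs i
    have hzero : (0:ℕ) < M := by have := i.isLt; omega
    have := strictMono_chain hs i.val ⟨0, hzero⟩ i (by simp)
    omega
  have boundF : ∀ (g : Fin M → Fin k) (i : Fin M),
      (g i).val + (i.val - (D ∩ Finset.range i.val).card) < k + M - 1 - D.card := by
    intro g i
    have h1 := (g i).isLt
    have h2 := fact1 i.val
    have h3 := fact4 i.val i.isLt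
    omega
  have boundG : ∀ (h : Fin M → Fin (k + M - 1 - D.card)), StrictMono h → ∀ i : Fin M,
      (h i).val - (i.val - (D ∩ Finset.range i.val).card) < k := by
    intro h hs i
    have hM : M - 1 < M := by have := i.isLt; omega
    have hchain := strictMono_chain hs (M - 1 - i.val) i ⟨M - 1, hM⟩ (by simp; omega)
    have h2 := (h ⟨M - 1, hM⟩).isLt
    have h3 := fact1 i.val
    have h4 := factD i.val
    omega
  rw [← card_strictMono M (k + M - 1 - D.card)]
  refine Finset.card_bij'
    (fun g _ => fun i : Fin M =>
      (⟨(g i).val + (i.val - (D ∩ Finset.range i.val).card), boundF g i⟩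
        : Fin (k + M - 1 - D.card)))
    (fun h hh => fun i : Fin M =>
      (⟨(h i).val - (i.val - (D ∩ Finset.range i.val).card),
        boundG h (Finset.mem_filter.mp hh).2 i⟩ : Fin k)) ?_ ?_ ?_ ?_
  · -- maps into strictMono filter
    intro g hg
    rw [Finset.mem_filter] at hg ⊢
    have hmono := hg.2.1
    have hstrict := hg.2.2
    refine ⟨mem_univ _, ?_⟩
    apply strictMono_of_adj
    intro t ht
    rw [Fin.mk_lt_mk]
    simp only
    have h1 := fact1 t
    by_cases htD : t ∈ D
    · have h2 := fact2 t htD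
      have h3 := hstrict t htD ht
      rw [Fin.lt_def] at h3
      omega
    · have h2 := fact3 t htD
      have h3 : g ⟨t, Nat.lt_of_succ_lt ht⟩ ≤ g ⟨t + 1, ht⟩ :=
        hmono (by rw [Fin.le_def]; simp)
      rw [Fin.le_def] at h3
      omega
  · -- maps into monotone filter
    intro h hh
    rw [Finset.mem_filter] at hh ⊢
    have hs : StrictMono h := hh.2
    refine ⟨mem_univ _, ?_, ?_⟩
    · apply monotone_of_adj
      intro t ht
      rw [Fin.mk_le_mk]
      simp only
      have hadj : h ⟨t, Nat.lt_of_succ_lt ht⟩ < h ⟨t + 1, ht⟩ := hs (by rw [Fin.lt_def]; simp)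
      rw [Fin.lt_def] at hadj
      have h1 := fact1 t
      by_cases htD : t ∈ D
      · have h2 := fact2 t htD; omega
      · have h2 := fact3 t htD; omega
    · intro t htD ht
      rw [Fin.mk_lt_mk]
      simp only
      have hadj : h ⟨t, Nat.lt_of_succ_lt ht⟩ < h ⟨t + 1, ht⟩ := hs (by rw [Fin.lt_def]; simp)
      rw [Fin.lt_def] at hadj
      have h1 := fact1 t
      have h2 := fact2 t htD
      have hle : t ≤ (h ⟨t, Nat.lt_of_succ_lt ht⟩).val := by
        simpa using chain0 h hs ⟨t, Nat.lt_of_succ_lt ht⟩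
      omega
  · -- left inverse
    intro g hg
    funext x
    ext
    simp only
    omega
  · -- right inverse
    intro h hh
    have hs : StrictMono h := (Finset.mem_filter.mp hh).2
    funext x
    ext
    simp only
    have h1 := fact1 x.val
    have hle : x.val ≤ (h x).val := chain0 h hs x
    omega

lemma pairwise_of_adj {M : ℕ} {β : Type*} [LinearOrder β] (σ : Equiv.Perm (Fin M))
    (g : Fin M → β) (hmono : Monotone g)
    (hadj : ∀ t, ∀ ht : t + 1 < M, σ ⟨t + 1, ht⟩ < σ ⟨t, Nat.lt_of_succ_lt ht⟩ →
      g ⟨t, Nat.lt_of_succ_lt ht⟩ < g ⟨t + 1, ht⟩) :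
    ∀ i j : Fin M, i < j → g i = g j → σ i < σ j := by
  have adj_case : ∀ i j : Fin M, i.val + 1 = j.val → g i = g j → σ i < σ j := by
    intro i j hij hg
    have ht : i.val + 1 < M := by have := j.isLt; omega
    have hi : (⟨i.val, Nat.lt_of_succ_lt ht⟩ : Fin M) = i := by ext; rfl
    have hj : (⟨i.val + 1, ht⟩ : Fin M) = j := by ext; simp; omega
    by_contra hcon
    push_neg at hcon
    have hne : σ j ≠ σ i := fun h => by
      have : j = i := σ.injective h
      rw [this] at hij; omega
    have hlt : σ j < σ i := lt_of_le_of_ne hcon hne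
    rw [← hi, ← hj] at hlt hg
    exact absurd hg (ne_of_lt (hadj i.val ht hlt))
  have key : ∀ d (i j : Fin M), i.val + d + 1 = j.val → g i = g j → σ i < σ j := by
    intro d
    induction d with
    | zero => intro i j hij hg; exact adj_case i j (by omega) hg
    | succ d ih =>
      intro i j hij hg
      have hmid : i.val + d + 1 < M := by have := j.isLt; omega
      set mid : Fin M := ⟨i.val + d + 1, hmid⟩ with hmiddef
      have h1 : g i ≤ g mid := hmono (by rw [Fin.le_def]; show i.val ≤ i.val + d + 1; omega)
      have h2 : g mid ≤ g j := hmono (by rw [Fin.le_def]; show i.val + d + 1 ≤ j.val; omega)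
      have e1 : g i = g mid := le_antisymm h1 (hg ▸ h2)
      have e2 : g mid = g j := le_antisymm h2 (hg ▸ h1)
      exact (ih i mid rfl e1).trans (adj_case mid j (by simp [hmiddef]; omega) e2)
  intro i j hij hg
  exact key (j.val - i.val - 1) i j (by rw [Fin.lt_def] at hij; omega) hg

lemma fiber_card (M k : ℕ) (hk : 1 ≤ k) (σ : Equiv.Perm (Fin M)) :
    ((univ : Finset (Fin M → Fin k)).filter (fun f => Tuple.sort f = σ)).card
      = (M + k - 1 - numDescents M σ).choose M := by
  classical
  set D : Finset ℕ := (Finset.range (M - 1)).filter (fun t =>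
    ∃ h : t + 1 < M, σ ⟨t + 1, h⟩ < σ ⟨t, Nat.lt_of_succ_lt h⟩) with hDdef
  have hnum : numDescents M σ = D.card := by
    rw [hDdef, numDescents]
  have hD : ∀ t ∈ D, t + 1 < M := by
    intro t ht
    rw [hDdef, Finset.mem_filter, Finset.mem_range] at ht
    omega
  have hmem : ∀ t, ∀ ht : t + 1 < M,
      (σ ⟨t + 1, ht⟩ < σ ⟨t, Nat.lt_of_succ_lt ht⟩) → t ∈ D := by
    intro t ht hdesc
    rw [hDdef, Finset.mem_filter, Finset.mem_range]
    exact ⟨by omega, ht, hdesc⟩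
  have hdesc : ∀ t ∈ D, ∀ ht : t + 1 < M, σ ⟨t + 1, ht⟩ < σ ⟨t, Nat.lt_of_succ_lt ht⟩ := by
    intro t ht ht'
    rw [hDdef, Finset.mem_filter] at ht
    obtain ⟨-, h, hlt⟩ := ht
    exact hlt
  rw [hnum, show M + k - 1 - D.card = k + M - 1 - D.card by omega,
    ← count_mono M k hk D hD]
  apply Finset.card_nbij' (i := fun f => f ∘ ⇑σ) (j := fun g => g ∘ ⇑σ.symm)
  · intro f hf
    rw [Finset.mem_coe, Finset.mem_filter] at hf ⊢
    have hiff := (Tuple.eq_sort_iff (f := f) (σ := σ)).mp hf.2.symm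
    refine ⟨mem_univ _, hiff.1, ?_⟩
    intro t ht ht'
    have hd := hdesc t ht ht'
    have hne : f (σ ⟨t, Nat.lt_of_succ_lt ht'⟩) ≠ f (σ ⟨t + 1, ht'⟩) := by
      intro heq
      have := hiff.2 ⟨t, Nat.lt_of_succ_lt ht'⟩ ⟨t + 1, ht'⟩ (by rw [Fin.lt_def]; simp) heq
      exact absurd hd (asymm this)
    exact lt_of_le_of_ne (hiff.1 (by rw [Fin.le_def]; simp)) hne
  · intro g hg
    rw [Finset.mem_coe, Finset.mem_filter] at hg ⊢
    obtain ⟨-, hmono, hstrict⟩ := hg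
    refine ⟨mem_univ _, ?_⟩
    symm
    rw [Tuple.eq_sort_iff]
    have hcomp : (g ∘ ⇑σ.symm) ∘ ⇑σ = g := by
      funext x; simp
    constructor
    · rw [hcomp]; exact hmono
    · intro i j hij heq
      simp only [Function.comp_apply, Equiv.symm_apply_apply] at heq
      exact pairwise_of_adj σ g hmono
        (fun t ht hd => hstrict t (hmem t ht hd) ht) i j hij heq
  · intro f hf
    funext x; simp
  · intro g hg
    funext x; simp

theorem worpitzky (M k : ℕ) (hk : 1 ≤ k) :
    ∑ σ : Equiv.Perm (Fin M), (M + k - 1 - numDescents M σ).choose M = k ^ M := by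
  classical
  have h1 : ((univ : Finset (Fin M → Fin k))).card = k ^ M := by
    rw [card_univ, Fintype.card_fun, Fintype.card_fin, Fintype.card_fin]
  rw [← h1, Finset.card_eq_sum_card_fiberwise
    (f := fun f => Tuple.sort f) (t := univ) (fun f _ => mem_univ _)]
  exact Finset.sum_congr rfl (fun σ _ => (fiber_card M k hk σ).symm)

lemma cd_eq (m : ℕ) (π : Equiv.Perm (Fin (m + 2))) :
    numCyclicDescents (m + 2) π
      = ((univ : Finset (Fin (m + 2))).filter (fun i => π (i + 1) < π i)).card := by
  classical
  rw [Finset.card_filter, Fin.sum_univ_castSucc, numCyclicDescents]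
  congr 1
  · -- descents part
    rw [numDescents, Finset.card_filter]
    rw [show m + 2 - 1 = m + 1 from rfl]
    rw [← Fin.sum_univ_eq_sum_range (fun t => if (∃ h : t + 1 < m + 2,
      π ⟨t + 1, h⟩ < π ⟨t, Nat.lt_of_succ_lt h⟩) then 1 else 0) (m + 1)]
    apply Finset.sum_congr rfl
    intro i _
    have hlt : i.val + 1 < m + 2 := by have := i.isLt; omega
    have e1 : (Fin.castSucc i) = ⟨i.val, Nat.lt_of_succ_lt hlt⟩ := by ext; rfl
    have e2 : (Fin.castSucc i) + 1 = ⟨i.val + 1, hlt⟩ := by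
      ext; simp [Fin.add_def, Nat.mod_eq_of_lt hlt]
    have hcond : (∃ h : i.val + 1 < m + 2,
        π ⟨i.val + 1, h⟩ < π ⟨i.val, Nat.lt_of_succ_lt h⟩)
        ↔ π (Fin.castSucc i + 1) < π (Fin.castSucc i) := by
      rw [e2, e1]
      constructor
      · rintro ⟨h, hl⟩; exact hl
      · intro h; exact ⟨hlt, h⟩
    rw [if_congr hcond rfl rfl]
  · -- cyclic part
    have hc : hasCyclicDescentAtLast (m + 2) π
        ↔ π (Fin.last (m + 1) + 1) < π (Fin.last (m + 1)) := by
      rw [hasCyclicDescentAtLast]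
      have e0 : (⟨0, by omega⟩ : Fin (m + 2)) = Fin.last (m + 1) + 1 := by
        rw [Fin.last_add_one]; rfl
      have e1 : (⟨m + 2 - 1, by omega⟩ : Fin (m + 2)) = Fin.last (m + 1) := rfl
      constructor
      · rintro ⟨h, hl⟩; rwa [← e0, ← e1]
      · intro h; exact ⟨by omega, by rwa [e0, e1]⟩
    rw [if_congr hc rfl rfl]

lemma cd_int (m : ℕ) (π : Equiv.Perm (Fin (m + 2))) :
    ((m + 2 : ℕ) : ℤ) * (numCyclicDescents (m + 2) π : ℤ) =
      ∑ i : Fin (m + 2), ((((π (i + 1)).val : ℤ) - ((π i).val : ℤ)) % ((m + 2 : ℕ) : ℤ)) := by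
  classical
  have hne : ∀ i : Fin (m + 2), π (i + 1) ≠ π i := by
    intro i h
    have h2 := π.injective h
    have h3 : (i + 1).val ≠ i.val := by
      rw [Fin.add_def]
      simp only [Fin.val_one]
      rcases Nat.lt_or_ge (i.val + 1) (m + 2) with h4 | h4
      · rw [Nat.mod_eq_of_lt h4]; omega
      · have : i.val = m + 1 := by have := i.isLt; omega
        rw [this]
        rw [show m + 1 + 1 = m + 2 from rfl, Nat.mod_self]
        omega
    exact h3 (by rw [h2])
  have hterm : ∀ i : Fin (m + 2),
      ((((π (i + 1)).val : ℤ) - ((π i).val : ℤ)) % ((m + 2 : ℕ) : ℤ))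
        = (((π (i + 1)).val : ℤ) - ((π i).val : ℤ))
            + (if π (i + 1) < π i then ((m + 2 : ℕ) : ℤ) else 0) := by
    intro i
    have h1 := (π (i + 1)).isLt
    have h2 := (π i).isLt
    by_cases hlt : π (i + 1) < π i
    · rw [if_pos hlt]
      rw [Fin.lt_def] at hlt
      have step : (((π (i + 1)).val : ℤ) - ((π i).val : ℤ)) % ((m + 2 : ℕ) : ℤ)
          = ((((π (i + 1)).val : ℤ) - ((π i).val : ℤ)) + ((m + 2 : ℕ) : ℤ))
              % ((m + 2 : ℕ) : ℤ) := by
        simp [Int.add_mul_emod_self_left]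
      rw [step]
      apply Int.emod_eq_of_lt
      · push_cast; omega
      · push_cast; omega
    · rw [if_neg hlt, add_zero]
      have hlt2 : π i < π (i + 1) :=
        lt_of_le_of_ne (not_lt.mp hlt) (fun h => hne i h.symm)
      rw [Fin.lt_def] at hlt2
      apply Int.emod_eq_of_lt
      · push_cast; omega
      · push_cast; omega
  rw [Finset.sum_congr rfl (fun i _ => hterm i), Finset.sum_add_distrib]
  have htel : ∑ i : Fin (m + 2), (((π (i + 1)).val : ℤ) - ((π i).val : ℤ)) = 0 := by
    rw [Finset.sum_sub_distrib]
    rw [Fintype.sum_equiv (Equiv.addRight (1 : Fin (m + 2)))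
      (fun i => ((π (i + 1)).val : ℤ)) (fun i => ((π i).val : ℤ)) (fun i => by simp)]
    exact sub_self _
  rw [htel, zero_add, cd_eq]
  rw [Finset.sum_ite, Finset.sum_const_zero, Finset.sum_const, add_zero]
  push_cast
  ring

lemma cd_comp_addRight (m : ℕ) (π : Equiv.Perm (Fin (m + 2))) (d : Fin (m + 2)) :
    numCyclicDescents (m + 2) ((Equiv.addRight d).trans π) = numCyclicDescents (m + 2) π := by
  classical
  rw [cd_eq, cd_eq]
  apply Finset.card_equiv (Equiv.addRight d)
  intro x
  simp only [Finset.mem_filter, Finset.mem_univ, true_and, Equiv.trans_apply,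
    Equiv.coe_addRight]
  rw [add_right_comm]
  exact Finset.mem_filter.trans (and_iff_right (Finset.mem_univ _))

lemma cd_addRight_comp (m : ℕ) (π : Equiv.Perm (Fin (m + 2))) (d : Fin (m + 2)) :
    numCyclicDescents (m + 2) (π.trans (Equiv.addRight d)) = numCyclicDescents (m + 2) π := by
  have h1 := cd_int m (π.trans (Equiv.addRight d))
  have h2 := cd_int m π
  have hsum : ∑ i : Fin (m + 2),
        (((((π.trans (Equiv.addRight d)) (i + 1)).val : ℤ)
          - (((π.trans (Equiv.addRight d)) i).val : ℤ)) % ((m + 2 : ℕ) : ℤ))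
      = ∑ i : Fin (m + 2), ((((π (i + 1)).val : ℤ) - ((π i).val : ℤ)) % ((m + 2 : ℕ) : ℤ)) := by
    apply Finset.sum_congr rfl
    intro x _
    have key : ∀ y : Fin (m + 2), (((π.trans (Equiv.addRight d)) y).val : ℤ)
        = (((π y).val : ℤ) + (d.val : ℤ)) % ((m + 2 : ℕ) : ℤ) := by
      intro y
      simp only [Equiv.trans_apply, Equiv.coe_addRight]
      rw [Fin.add_def, Int.natCast_mod, Nat.cast_add]
    rw [key (x + 1), key x, ← Int.sub_emod]
    congr 1
    ring
  rw [hsum] at h1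
  have h3 : ((m + 2 : ℕ) : ℤ) * (numCyclicDescents (m + 2) (π.trans (Equiv.addRight d)) : ℤ)
      = ((m + 2 : ℕ) : ℤ) * (numCyclicDescents (m + 2) π : ℤ) := h1.trans h2.symm
  have h4 := mul_left_cancel₀ (by positivity : ((m + 2 : ℕ) : ℤ) ≠ 0) h3
  exact_mod_cast h4

lemma sum_fiber_eq (m k : ℕ) (i j : Fin (m + 2)) :
    ∑ π ∈ Finset.univ.filter (fun π : Equiv.Perm (Fin (m + 2)) => π i = j), cutRiffle k (m + 2) π
      = ∑ π ∈ Finset.univ.filter (fun π : Equiv.Perm (Fin (m + 2)) => π 0 = 0),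
          cutRiffle k (m + 2) π := by
  classical
  apply Finset.sum_nbij'
    (i := fun π => (Equiv.addRight i).trans (π.trans (Equiv.addRight (-j))))
    (j := fun τ => (Equiv.addRight (-i)).trans (τ.trans (Equiv.addRight j)))
  · intro π hπ
    rw [Finset.mem_filter] at hπ ⊢
    refine ⟨mem_univ _, ?_⟩
    simp [Equiv.trans_apply, hπ.2]
  · intro τ hτ
    rw [Finset.mem_filter] at hτ ⊢
    refine ⟨mem_univ _, ?_⟩
    simp [Equiv.trans_apply, hτ.2]
  · intro π _
    ext x
    simp [Equiv.trans_apply, neg_add_cancel_right]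
  · intro τ _
    ext x
    simp [Equiv.trans_apply, neg_add_cancel_right]
  · intro π _
    rw [cutRiffle, cutRiffle]
    congr 2
    rw [cd_comp_addRight, cd_addRight_comp]

lemma numDescents_le (M : ℕ) (σ : Equiv.Perm (Fin M)) : numDescents M σ ≤ M - 1 := by
  rw [numDescents]
  calc _ ≤ (Finset.range (M - 1)).card := Finset.card_filter_le _ _
  _ = M - 1 := Finset.card_range _

lemma cd_of_fix0 (m : ℕ) (π : Equiv.Perm (Fin (m + 2))) (σ : Equiv.Perm (Fin (m + 1)))
    (hπ0 : π 0 = 0) (hπs : ∀ x : Fin (m + 1), π x.succ = (σ x).succ) :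
    numCyclicDescents (m + 2) π = numDescents (m + 1) σ + 1 := by
  classical
  have hcyc : hasCyclicDescentAtLast (m + 2) π := by
    refine ⟨by omega, ?_⟩
    have e0 : (⟨0, by omega⟩ : Fin (m + 2)) = 0 := by ext; simp
    have el : (⟨m + 2 - 1, by omega⟩ : Fin (m + 2)) = (⟨m, by omega⟩ : Fin (m + 1)).succ := rfl
    rw [e0, el, hπ0, hπs]
    exact Fin.succ_pos _
  rw [numCyclicDescents, if_pos hcyc]
  congr 1
  rw [numDescents, numDescents]
  refine Finset.card_bij' (fun t _ => t - 1) (fun s _ => s + 1) ?_ ?_ ?_ ?_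
  · -- forward membership
    intro t ht
    rw [Finset.mem_filter, Finset.mem_range] at ht
    obtain ⟨htr, h, hlt⟩ := ht
    have ht0 : t ≠ 0 := by
      intro h0
      subst h0
      have e0 : (⟨0, by omega⟩ : Fin (m + 2)) = 0 := by ext; simp
      rw [e0, hπ0] at hlt
      exact Fin.not_lt_zero _ hlt
    obtain ⟨s, rfl⟩ : ∃ s, t = s + 1 := ⟨t - 1, by omega⟩
    have e1 : (⟨s + 1 + 1, h⟩ : Fin (m + 2)) = (⟨s + 1, by omega⟩ : Fin (m + 1)).succ := rfl
    have e2 : (⟨s + 1, by omega⟩ : Fin (m + 2)) = (⟨s, by omega⟩ : Fin (m + 1)).succ := rfl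
    rw [e1, e2, hπs, hπs, Fin.succ_lt_succ_iff] at hlt
    simp only [Finset.mem_filter, Finset.mem_range, Nat.add_sub_cancel]
    exact ⟨by omega, by omega, hlt⟩
  · -- backward membership
    intro s hs
    rw [Finset.mem_filter, Finset.mem_range] at hs
    obtain ⟨hsr, h, hlt⟩ := hs
    simp only [Finset.mem_filter, Finset.mem_range]
    refine ⟨by omega, by omega, ?_⟩
    have e1 : (⟨s + 1 + 1, by omega⟩ : Fin (m + 2)) = (⟨s + 1, by omega⟩ : Fin (m + 1)).succ := rfl
    have e2 : (⟨s + 1, by omega⟩ : Fin (m + 2)) = (⟨s, by omega⟩ : Fin (m + 1)).succ := rfl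
    rw [e1, e2, hπs, hπs, Fin.succ_lt_succ_iff]
    exact hlt
  · intro t ht
    show t - 1 + 1 = t
    rw [Finset.mem_filter, Finset.mem_range] at ht
    obtain ⟨htr, h, hlt⟩ := ht
    have ht0 : t ≠ 0 := by
      intro h0
      subst h0
      have e0 : (⟨0, by omega⟩ : Fin (m + 2)) = 0 := by ext; simp
      rw [e0, hπ0] at hlt
      exact Fin.not_lt_zero _ hlt
    omega
  · intro s _
    show s + 1 - 1 = s
    omega


theorem main' (n k : ℕ) (hn : 2 ≤ n) (hk : 1 ≤ k) (i j : Fin n) :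
    ∑ π ∈ Finset.univ.filter (fun π : Equiv.Perm (Fin n) => π i = j), cutRiffle k n π
      = 1 / (n : ℝ) := by
  classical
  obtain ⟨m, rfl⟩ : ∃ m, n = m + 2 := ⟨n - 2, by omega⟩
  rw [sum_fiber_eq m k i j]
  have hmain : ∑ π ∈ Finset.univ.filter (fun π : Equiv.Perm (Fin (m + 2)) => π 0 = 0),
      cutRiffle k (m + 2) π
      = ∑ σ : Equiv.Perm (Fin (m + 1)),
          ((Nat.choose ((m + 1) + k - 1 - numDescents (m + 1) σ) (m + 1) : ℝ)
            / (((m + 2 : ℕ) : ℝ) * (k : ℝ) ^ (m + 1))) := by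
    symm
    apply Finset.sum_nbij'
      (i := fun σ => Equiv.Perm.decomposeFin.symm (0, σ))
      (j := fun π => (Equiv.Perm.decomposeFin π).2)
    · intro σ _
      rw [Finset.mem_filter]
      exact ⟨mem_univ _, Equiv.Perm.decomposeFin_symm_apply_zero 0 σ⟩
    · intro π _
      exact mem_univ _
    · intro σ _
      have := Equiv.apply_symm_apply Equiv.Perm.decomposeFin (0, σ)
      rw [this]
    · intro π hπ
      rw [Finset.mem_filter] at hπ
      have h0 : π 0 = 0 := hπ.2
      have hp : (Equiv.Perm.decomposeFin π).1 = 0 := by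
        have h1 : Equiv.Perm.decomposeFin.symm
            ((Equiv.Perm.decomposeFin π).1, (Equiv.Perm.decomposeFin π).2) 0
            = (Equiv.Perm.decomposeFin π).1 :=
          Equiv.Perm.decomposeFin_symm_apply_zero _ _
        rw [Prod.mk.eta, Equiv.symm_apply_apply] at h1
        rw [← h1, h0]
      calc Equiv.Perm.decomposeFin.symm (0, (Equiv.Perm.decomposeFin π).2)
          = Equiv.Perm.decomposeFin.symm
              ((Equiv.Perm.decomposeFin π).1, (Equiv.Perm.decomposeFin π).2) := by rw [hp]
      _ = π := by rw [Prod.mk.eta, Equiv.symm_apply_apply]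
    · intro σ _
      have hcd : numCyclicDescents (m + 2) (Equiv.Perm.decomposeFin.symm (0, σ))
          = numDescents (m + 1) σ + 1 := by
        apply cd_of_fix0 m _ σ (Equiv.Perm.decomposeFin_symm_apply_zero 0 σ)
        intro x
        rw [Equiv.Perm.decomposeFin_symm_apply_succ]
        simp
      rw [cutRiffle, hcd]
      have hle : numDescents (m + 1) σ ≤ m := by
        have := numDescents_le (m + 1) σ
        omega
      have harg : (m + 2) + k - (numDescents (m + 1) σ + 1) - 1
          = (m + 1) + k - 1 - numDescents (m + 1) σ := by omega
      rw [harg, show m + 2 - 1 = m + 1 from rfl]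
  rw [hmain, ← Finset.sum_div, ← Nat.cast_sum, worpitzky (m + 1) k hk]
  have hk0 : (k : ℝ) ≠ 0 := Nat.cast_ne_zero.mpr (by omega)
  have hm0 : ((m + 2 : ℕ) : ℝ) ≠ 0 := Nat.cast_ne_zero.mpr (by omega)
  push_cast
  rw [div_eq_div_iff (by positivity) (by positivity)]
  ring

end CutRiffleAux

/-- under the cut-then-k-riffle-shuffle measure, the position of any
single card is perfectly random. -/
theorem cutRiffle_position_uniform (n k : ℕ) (hn : 2 ≤ n) (hk : 1 ≤ k) (i j : Fin n) :
    ∑ π ∈ Finset.univ.filter (fun π : Equiv.Perm (Fin n) => π i = j), cutRiffle k n π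
      = 1 / (n : ℝ) :=
  CutRiffleAux.main' n k hn hk i j
end

section
/- For all integers n ≥ 2 and k ≥ n, the total variation distance between the type A affine k-shuffle measure and the cut-then-k-riffle-shuffle measure satisfies ||A_{k,n} − C_{k,n}|| < n·(2n/(e·k))^{n/2}. -/
/-- The major index of a permutation: the sum of positions `i` (1-indexed, `1 ≤ i ≤ n-1`)
with `π(i) > π(i+1)`. -/
def majorIndex (n : ℕ) (π : Equiv.Perm (Fin n)) : ℕ :=
  ∑ i ∈ (Finset.range (n - 1)).filter (fun i =>
    ∃ h : i + 1 < n, π ⟨i + 1, h⟩ < π ⟨i, Nat.lt_of_succ_lt h⟩), (i + 1)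

/-- The Ramanujan sum `C_r(m) = Σ_{1 ≤ l ≤ r, gcd(l,r)=1} exp(2πi·l·m/r)`, a real number. -/
noncomputable def ramanujanSum (r : ℕ) (m : ℤ) : ℝ :=
  (∑ l ∈ (Finset.Icc 1 r).filter (fun l => Nat.gcd l r = 1),
      Complex.exp (2 * Real.pi * Complex.I * (l : ℂ) * (m : ℂ) / (r : ℂ))).re

/-- The type A affine k-shuffle measure, for `k ≥ n` (so `k - cd(π) > 0` for all `π`):
`A_{k,n}(π) = (1/(n·k^(n-1))) Σ_{r | gcd(n, k-cd(π))} binom((n+k-cd(π)-r)/r, (n-r)/r)·C_r(-maj(π))`. -/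
noncomputable def affineShuffle (k n : ℕ) (π : Equiv.Perm (Fin n)) : ℝ :=
  (1 / ((n : ℝ) * (k : ℝ) ^ (n - 1))) *
    ∑ r ∈ (Nat.gcd n (k - numCyclicDescents n π)).divisors,
      (Nat.choose ((n + k - numCyclicDescents n π - r) / r) ((n - r) / r) : ℝ)
        * ramanujanSum r (-(majorIndex n π : ℤ))

/-!
Writing `d = n / r`, the affine measure differs from the cut-then-riffle measure exactly by the
divisor terms `r ≥ 2` of its defining sum, since the `r = 1` term is `C_{k,n}(π)`. Bounding the
Ramanujan sum by `r` and the binomial coefficient by `k ^ (d - 1) / (d - 1)!`, such a term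
contributes at most `1 / (d! k ^ (n - d))` to `|A_{k,n}(π) - C_{k,n}(π)|`. Two-sided Stirling
bounds show `n! / (d! k ^ (n - d)) ≤ 2 (2n / (e k)) ^ (n / 2)` for every proper divisor `d` of
`n`, and there are at most `n - 1` divisors `r ≥ 2`; summing over the `n!` permutations gives
`‖A_{k,n} - C_{k,n}‖ ≤ (n - 1) (2n / (e k)) ^ (n / 2)`.
-/

open scoped Nat

section FactorialEstimates

open Real

lemma sq_factorial_mul_exp_pow_le {n : ℕ} (hn : n ≠ 0) :
    (n ! : ℝ) ^ 2 * exp 1 ^ (2 * n) ≤ exp 1 ^ 2 * n ^ (2 * n + 1) := by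
  rcases n with _ | m
  · contradiction
  have hseq : Stirling.stirlingSeq (m + 1) ≤ exp 1 / √2 :=
    Stirling.stirlingSeq_one ▸ Stirling.stirlingSeq'_antitone (Nat.zero_le m)
  have hpos : (0 : ℝ) < √(2 * (m + 1 : ℕ)) * ((m + 1 : ℕ) / exp 1) ^ (m + 1) := by
    positivity
  rw [Stirling.stirlingSeq, div_le_iff₀ hpos] at hseq
  calc (((m + 1) ! : ℕ) : ℝ) ^ 2 * exp 1 ^ (2 * (m + 1))
      ≤ (exp 1 / √2 * (√(2 * (m + 1 : ℕ)) * ((m + 1 : ℕ) / exp 1) ^ (m + 1))) ^ 2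
          * exp 1 ^ (2 * (m + 1)) := by gcongr
    _ = _ := by
        rw [mul_pow, div_pow, mul_pow, Real.sq_sqrt (by positivity), Real.sq_sqrt (by positivity),
          ← pow_mul, div_pow]
        field_simp
        ring

lemma two_pi_mul_pow_le_sq_factorial_mul_exp_pow (d : ℕ) :
    2 * π * d ^ (2 * d + 1) ≤ (d ! : ℝ) ^ 2 * exp 1 ^ (2 * d) := by
  calc 2 * π * d ^ (2 * d + 1) = (√(2 * π * d) * (d / exp 1) ^ d) ^ 2 * exp 1 ^ (2 * d) := by
        rw [mul_pow, Real.sq_sqrt (by positivity), ← pow_mul, div_pow]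
        field_simp
        ring
    _ ≤ (d ! : ℝ) ^ 2 * exp 1 ^ (2 * d) := by gcongr; exact Stirling.le_factorial_stirling d

lemma sq_mul_exp_one_le_two_mul_exp_one_pow {r : ℕ} (hr : 2 ≤ r) :
    (r * exp 1) ^ 2 ≤ (2 * exp 1) ^ r := by
  induction r, hr using Nat.le_induction with
  | base => norm_num
  | succ r hr ih =>
    have hr' : (2 : ℝ) ≤ r := by exact_mod_cast hr
    have hsq : ((r : ℝ) + 1) ^ 2 ≤ 2 * exp 1 * r ^ 2 := by nlinarith [Real.exp_one_gt_d9]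
    calc (((r + 1 : ℕ) : ℝ) * exp 1) ^ 2 = ((r : ℝ) + 1) ^ 2 * exp 1 ^ 2 := by push_cast; ring
      _ ≤ 2 * exp 1 * r ^ 2 * exp 1 ^ 2 := by gcongr
      _ = 2 * exp 1 * (r * exp 1) ^ 2 := by ring
      _ ≤ 2 * exp 1 * (2 * exp 1) ^ r := by gcongr
      _ = (2 * exp 1) ^ (r + 1) := by ring

lemma exp_one_pow_four_mul_cube_le {r : ℕ} (hr : 2 ≤ r) :
    exp 1 ^ 4 * r ^ 3 ≤ 8 * π * (2 * exp 1) ^ r := by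
  induction r, hr using Nat.le_induction with
  | base =>
    have he : exp 1 ^ 2 ≤ 4 * π := by
      nlinarith [Real.exp_one_lt_d9, Real.pi_gt_three, Real.exp_pos 1]
    calc exp 1 ^ 4 * ((2 : ℕ) : ℝ) ^ 3 = 8 * exp 1 ^ 2 * exp 1 ^ 2 := by push_cast; ring
      _ ≤ 8 * (4 * π) * exp 1 ^ 2 := by gcongr
      _ = 8 * π * (2 * exp 1) ^ 2 := by ring
  | succ r hr ih =>
    have hr' : (2 : ℝ) ≤ r := by exact_mod_cast hr
    have hcube : ((r : ℝ) + 1) ^ 3 ≤ 2 * exp 1 * r ^ 3 := by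
      nlinarith [Real.exp_one_gt_d9, mul_nonneg (sub_nonneg.2 hr') (sq_nonneg (r : ℝ)),
        pow_pos (by linarith : (0 : ℝ) < r) 3]
    calc exp 1 ^ 4 * ((r + 1 : ℕ) : ℝ) ^ 3 ≤ exp 1 ^ 4 * (2 * exp 1 * r ^ 3) := by
          push_cast; gcongr
      _ = 2 * exp 1 * (exp 1 ^ 4 * r ^ 3) := by ring
      _ ≤ 2 * exp 1 * (8 * π * (2 * exp 1) ^ r) := by gcongr
      _ = 8 * π * (2 * exp 1) ^ (r + 1) := by ring

-- What remains of `sq_factorial_mul_exp_pow_le_of_mul_eq` after both Stirling bounds, `n = r d`.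
lemma exp_one_sq_mul_mul_pow_le {r d : ℕ} (hr : 2 ≤ r) (hd : 1 ≤ d) :
    exp 1 ^ 2 * r * (r * exp 1) ^ (2 * d) ≤ 8 * π * (2 * exp 1) ^ (r * d) := by
  obtain ⟨d, rfl⟩ := Nat.exists_eq_add_of_le' hd
  calc exp 1 ^ 2 * r * (r * exp 1) ^ (2 * (d + 1))
      = exp 1 ^ 4 * r ^ 3 * ((r * exp 1) ^ 2) ^ d := by ring
    _ ≤ 8 * π * (2 * exp 1) ^ r * ((2 * exp 1) ^ r) ^ d :=
        mul_le_mul (exp_one_pow_four_mul_cube_le hr)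
          (pow_le_pow_left₀ (by positivity) (sq_mul_exp_one_le_two_mul_exp_one_pow hr) d)
          (by positivity) (by positivity)
    _ = 8 * π * (2 * exp 1) ^ (r * (d + 1)) := by ring

lemma sq_factorial_mul_exp_pow_le_of_mul_eq {n r d : ℕ} (hrd : r * d = n) (hr : 2 ≤ r)
    (hd : 1 ≤ d) :
    (n ! : ℝ) ^ 2 * exp 1 ^ n ≤ 4 * 2 ^ n * n ^ (2 * (n - d)) * (d ! : ℝ) ^ 2 := by
  have hdn : d ≤ n := hrd ▸ Nat.le_mul_of_pos_left d (by omega)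
  have hexp : 2 * n + 1 = 2 * (n - d) + (2 * d + 1) := by omega
  have hnd : (n : ℝ) ^ (2 * d + 1) = (r * d) ^ (2 * d + 1) := by rw [← hrd]; push_cast; rfl
  refine le_of_mul_le_mul_right ?_ (by positivity : 0 < exp 1 ^ n * exp 1 ^ (2 * d))
  calc (n ! : ℝ) ^ 2 * exp 1 ^ n * (exp 1 ^ n * exp 1 ^ (2 * d))
      = (n ! : ℝ) ^ 2 * exp 1 ^ (2 * n) * exp 1 ^ (2 * d) := by ring
    _ ≤ exp 1 ^ 2 * n ^ (2 * n + 1) * exp 1 ^ (2 * d) :=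
        mul_le_mul_of_nonneg_right (sq_factorial_mul_exp_pow_le (by omega)) (by positivity)
    _ = exp 1 ^ 2 * r * (r * exp 1) ^ (2 * d) * (n ^ (2 * (n - d)) * d ^ (2 * d + 1)) := by
        rw [hexp, pow_add, hnd]; ring
    _ ≤ 8 * π * (2 * exp 1) ^ (r * d) * (n ^ (2 * (n - d)) * d ^ (2 * d + 1)) :=
        mul_le_mul_of_nonneg_right (exp_one_sq_mul_mul_pow_le hr hd) (by positivity)
    _ = 4 * 2 ^ n * n ^ (2 * (n - d)) * exp 1 ^ n * (2 * π * d ^ (2 * d + 1)) := by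
        rw [hrd]; ring
    _ ≤ 4 * 2 ^ n * n ^ (2 * (n - d)) * exp 1 ^ n * ((d ! : ℝ) ^ 2 * exp 1 ^ (2 * d)) :=
        mul_le_mul_of_nonneg_left (two_pi_mul_pow_le_sq_factorial_mul_exp_pow d) (by positivity)
    _ = _ := by ring

lemma factorial_div_le_two_mul_rpow {n r d k : ℕ} (hrd : r * d = n) (hr : 2 ≤ r) (hd : 1 ≤ d)
    (hk : n ≤ k) :
    (n ! : ℝ) / (d ! * k ^ (n - d)) ≤ 2 * (2 * n / (exp 1 * k)) ^ ((n : ℝ) / 2) := by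
  have hn : 0 < n := hrd ▸ Nat.mul_pos (by omega) hd
  have hk0 : (0 : ℝ) < k := by exact_mod_cast hn.trans_le hk
  have hnk : (n : ℝ) ≤ k := by exact_mod_cast hk
  have h2d : n ≤ 2 * (n - d) := by
    have : 2 * d ≤ n := hrd ▸ Nat.mul_le_mul_right d hr
    omega
  rw [Real.rpow_div_two_eq_sqrt _ (by positivity), Real.rpow_natCast,
    ← pow_le_pow_iff_left₀ (by positivity) (by positivity) two_ne_zero, mul_pow, ← pow_mul,
    mul_comm n 2, pow_mul, Real.sq_sqrt (by positivity), div_pow, div_pow, mul_pow, mul_pow,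
    mul_pow, ← pow_mul, div_le_iff₀ (by positivity)]
  have hpow : (n : ℝ) ^ (2 * (n - d)) * k ^ n ≤ (n : ℝ) ^ n * k ^ (2 * (n - d)) := by
    obtain ⟨t, ht⟩ := Nat.exists_eq_add_of_le h2d
    rw [ht, pow_add, pow_add]
    calc (n : ℝ) ^ n * n ^ t * k ^ n ≤ (n : ℝ) ^ n * k ^ t * k ^ n := by gcongr
      _ = _ := by ring
  have key : (n ! : ℝ) ^ 2 * exp 1 ^ n * k ^ n
      ≤ 4 * 2 ^ n * n ^ n * (d ! : ℝ) ^ 2 * k ^ (2 * (n - d)) :=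
    calc (n ! : ℝ) ^ 2 * exp 1 ^ n * k ^ n
        ≤ 4 * 2 ^ n * n ^ (2 * (n - d)) * (d ! : ℝ) ^ 2 * k ^ n :=
          mul_le_mul_of_nonneg_right (sq_factorial_mul_exp_pow_le_of_mul_eq hrd hr hd)
            (by positivity)
      _ = 4 * 2 ^ n * (d ! : ℝ) ^ 2 * (n ^ (2 * (n - d)) * k ^ n) := by ring
      _ ≤ 4 * 2 ^ n * (d ! : ℝ) ^ 2 * (n ^ n * k ^ (2 * (n - d))) := by gcongr
      _ = _ := by ring
  field_simp
  rw [mul_comm (n - d) 2]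
  linarith

end FactorialEstimates

lemma ramanujanSum_one (m : ℤ) : ramanujanSum 1 m = 1 := by
  have h : (Finset.Icc 1 1).filter (fun l => Nat.gcd l 1 = 1) = {1} := by decide
  rw [ramanujanSum, h, Finset.sum_singleton, Nat.cast_one, div_one, mul_one,
    mul_comm, Complex.exp_int_mul_two_pi_mul_I, Complex.one_re]

lemma abs_ramanujanSum_le (r : ℕ) (m : ℤ) : |ramanujanSum r m| ≤ r := by
  set F := (Finset.Icc 1 r).filter (fun l => Nat.gcd l r = 1)
  set z : ℕ → ℂ :=
    fun l => Complex.exp (2 * Real.pi * Complex.I * (l : ℂ) * (m : ℂ) / (r : ℂ))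
  have hnorm : ∀ l ∈ F, ‖z l‖ = 1 := by
    intro l _
    rw [show z l = Complex.exp (((2 * Real.pi * l * m / r : ℝ) : ℂ) * Complex.I) by
      simp only [z]; push_cast; ring_nf]
    exact Complex.norm_exp_ofReal_mul_I _
  calc |ramanujanSum r m| ≤ ‖∑ l ∈ F, z l‖ := Complex.abs_re_le_norm _
    _ ≤ ∑ l ∈ F, ‖z l‖ := norm_sum_le _ _
    _ = F.card := by rw [Finset.sum_congr rfl hnorm]; simp
    _ ≤ r := by exact_mod_cast (Finset.card_filter_le _ _).trans (Nat.card_Icc 1 r).le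

lemma abs_choose_mul_ramanujanSum_le {n k r : ℕ} (hn : 0 < n) (hrn : r ∣ n) (hr : 2 ≤ r)
    (hk : n ≤ k) (c : ℕ) (m : ℤ) :
    |((n + k - c - r) / r).choose ((n - r) / r) * ramanujanSum r m|
      ≤ n * k ^ (n / r - 1) / (n / r)! := by
  obtain ⟨d, rfl⟩ := hrn
  have hr0 : 0 < r := by omega
  have hd : 1 ≤ d := Nat.pos_of_mul_pos_left hn
  have hbot : (r * d - r) / r = d - 1 := by
    rw [← Nat.mul_sub_one, Nat.mul_div_cancel_left _ hr0]
  have htop : (r * d + k - c - r) / r ≤ k :=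
    calc (r * d + k - c - r) / r ≤ (r * d + k) / 2 :=
          (Nat.div_le_div_right (by omega)).trans (Nat.div_le_div_left hr (by norm_num))
      _ ≤ k := by omega
  have hfact : (d : ℝ) * (d - 1)! = d ! := by
    exact_mod_cast Nat.mul_factorial_pred (by omega : d ≠ 0)
  rw [Nat.mul_div_cancel_left _ hr0, hbot, abs_mul, Nat.abs_cast]
  calc (((r * d + k - c - r) / r).choose (d - 1) : ℝ) * |ramanujanSum r m|
      ≤ k ^ (d - 1) / (d - 1)! * r := by
        gcongr
        · exact (Nat.choose_le_pow_div _ _).trans (by gcongr)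
        · exact abs_ramanujanSum_le r m
    _ = (r * d : ℕ) * k ^ (d - 1) / d ! := by
        rw [← hfact]; push_cast; field_simp

lemma abs_choose_mul_ramanujanSum_le_rpow {n k r : ℕ} (hn : 0 < n) (hrn : r ∣ n) (hr : 2 ≤ r)
    (hk : n ≤ k) (c : ℕ) (m : ℤ) :
    |((n + k - c - r) / r).choose ((n - r) / r) * ramanujanSum r m|
      ≤ 2 * n * k ^ (n - 1) * (2 * n / (Real.exp 1 * k)) ^ ((n : ℝ) / 2) / n ! := by
  have hk0 : (0 : ℝ) < k := by exact_mod_cast hn.trans_le hk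
  have hrd : r * (n / r) = n := Nat.mul_div_cancel' hrn
  have hd : 1 ≤ n / r := Nat.div_pos (Nat.le_of_dvd hn hrn) (by omega)
  have hdn : n / r ≤ n := Nat.div_le_self n r
  have hkpow : (k : ℝ) ^ (n - 1) = k ^ (n / r - 1) * k ^ (n - n / r) := by
    rw [← pow_add]; congr 1; omega
  refine (abs_choose_mul_ramanujanSum_le hn hrn hr hk c m).trans ?_
  calc (n : ℝ) * k ^ (n / r - 1) / (n / r)!
      = n * k ^ (n - 1) / n ! * (n ! / ((n / r)! * k ^ (n - n / r))) := by
        rw [hkpow]; field_simp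
    _ ≤ n * k ^ (n - 1) / n ! * (2 * (2 * n / (Real.exp 1 * k)) ^ ((n : ℝ) / 2)) := by
        gcongr; exact factorial_div_le_two_mul_rpow hrd hr hd hk
    _ = _ := by ring

lemma affineShuffle_sub_cutRiffle {n : ℕ} (k : ℕ) (hn : n ≠ 0) (π : Equiv.Perm (Fin n)) :
    affineShuffle k n π - cutRiffle k n π = 1 / (n * k ^ (n - 1)) *
      ∑ r ∈ (Nat.gcd n (k - numCyclicDescents n π)).divisors.erase 1,
        ((n + k - numCyclicDescents n π - r) / r).choose ((n - r) / r)
          * ramanujanSum r (-(majorIndex n π : ℤ)) := by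
  have h1 : 1 ∈ (Nat.gcd n (k - numCyclicDescents n π)).divisors :=
    Nat.one_mem_divisors.2 (Nat.gcd_ne_zero_left hn)
  rw [affineShuffle, cutRiffle, ← Finset.add_sum_erase _ _ h1]
  simp only [Nat.div_one, ramanujanSum_one]
  ring

lemma abs_affineShuffle_sub_cutRiffle_le {n k : ℕ} (hn : 0 < n) (hk : n ≤ k)
    (π : Equiv.Perm (Fin n)) :
    |affineShuffle k n π - cutRiffle k n π|
      ≤ 2 * (n - 1) * (2 * n / (Real.exp 1 * k)) ^ ((n : ℝ) / 2) / n ! := by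
  set X := (2 * n / (Real.exp 1 * k) : ℝ) ^ ((n : ℝ) / 2)
  set g := Nat.gcd n (k - numCyclicDescents n π)
  have hk0 : (0 : ℝ) < k := by exact_mod_cast hn.trans_le hk
  have hterm : ∀ r ∈ g.divisors.erase 1,
      |((n + k - numCyclicDescents n π - r) / r).choose ((n - r) / r)
          * ramanujanSum r (-(majorIndex n π : ℤ))| ≤ 2 * n * k ^ (n - 1) * X / n ! := by
    intro r hr
    obtain ⟨hr1, hrg⟩ := Finset.mem_erase.1 hr
    have hr2 : 2 ≤ r := by have := Nat.pos_of_mem_divisors hrg; omega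
    exact abs_choose_mul_ramanujanSum_le_rpow hn
      ((Nat.dvd_of_mem_divisors hrg).trans (Nat.gcd_dvd_left _ _)) hr2 hk _ _
  have hcard : ((g.divisors.erase 1).card : ℝ) ≤ n - 1 := by
    have hsub : g.divisors ⊆ n.divisors :=
      Nat.divisors_subset_of_dvd hn.ne' (Nat.gcd_dvd_left _ _)
    have h1 : 1 ∈ g.divisors := Nat.one_mem_divisors.2 (Nat.gcd_ne_zero_left hn.ne')
    rw [Finset.card_erase_of_mem h1, Nat.cast_sub (Finset.card_pos.2 ⟨1, h1⟩), Nat.cast_one]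
    gcongr
    exact_mod_cast (Finset.card_le_card hsub).trans (Nat.card_divisors_le_self n)
  rw [affineShuffle_sub_cutRiffle k hn.ne', abs_mul, abs_of_pos (by positivity)]
  calc 1 / (n * k ^ (n - 1)) * |∑ r ∈ g.divisors.erase 1, _|
      ≤ 1 / (n * k ^ (n - 1))
          * ((g.divisors.erase 1).card * (2 * n * k ^ (n - 1) * X / n !)) := by
        gcongr
        exact (Finset.abs_sum_le_sum_abs _ _).trans
          ((Finset.sum_le_card_nsmul _ _ _ hterm).trans_eq (nsmul_eq_mul _ _))
    _ ≤ 1 / (n * k ^ (n - 1)) * ((n - 1) * (2 * n * k ^ (n - 1) * X / n !)) := by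
        gcongr
    _ = _ := by field_simp

/-- for `n ≥ 2` and `k ≥ n`,
`||A_{k,n} - C_{k,n}|| < n·(2n/(e·k))^(n/2)`. -/
theorem totalVariation_affine_cutRiffle_lt (n k : ℕ) (hn : 2 ≤ n) (hk : n ≤ k) :
    (1 / 2) * ∑ π : Equiv.Perm (Fin n), |affineShuffle k n π - cutRiffle k n π|
      < (n : ℝ) * (2 * (n : ℝ) / (Real.exp 1 * (k : ℝ))) ^ ((n : ℝ) / 2) := by
  have hn0 : 0 < n := by omega
  have hX : 0 < (2 * (n : ℝ) / (Real.exp 1 * k)) ^ ((n : ℝ) / 2) := by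
    have : (0 : ℝ) < k := by exact_mod_cast hn0.trans_le hk
    positivity
  calc (1 / 2) * ∑ π : Equiv.Perm (Fin n), |affineShuffle k n π - cutRiffle k n π|
      ≤ (1 / 2) * ∑ _π : Equiv.Perm (Fin n),
          2 * (n - 1) * (2 * n / (Real.exp 1 * k)) ^ ((n : ℝ) / 2) / n ! := by
        gcongr with π
        exact abs_affineShuffle_sub_cutRiffle_le hn0 hk π
    _ = (n - 1) * (2 * n / (Real.exp 1 * k)) ^ ((n : ℝ) / 2) := by
        rw [Finset.sum_const, Finset.card_univ, Fintype.card_perm, Fintype.card_fin, nsmul_eq_mul]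
        field_simp
    _ < n * (2 * n / (Real.exp 1 * k)) ^ ((n : ℝ) / 2) := by gcongr; linarith
end
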